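/- arXiv:2511.08712 — 4 statements merged into one kernel-verified Lean document; each statement's English description precedes it below -/
import Mathlib

section
/- Let (ℱ_{i,j})_{i,j≥0} be a two-parameter filtration satisfying the (F4) condition. Then for every p ∈ (1, ∞) there is a constant C_p depending only on p such that for all X ∈ L^p, ‖sup_{n,m} 𝔼_{n,m}|X|‖_{L^p} ≤ C_p ‖X‖_{L^p}; that is, an (F4) filtration has the Doob property. -/
/-
Under (F4), conditioning first on `ℱ_{∞,m}` and then on `ℱ_{n,∞}` is conditioning on `ℱ_{n,m}`:
this follows from `𝔼_{n,j} 𝔼_{k,m} = 𝔼_{n,m}` for `k ≥ n`, `j ≥ m` by letting `k → ∞` and then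
`j → ∞` (Lévy's upward theorem). Hence `sup_{n,m} 𝔼_{n,m}|X| ≤ sup_n 𝔼_{n,∞} (sup_m 𝔼_{∞,m}|X|)`,
and two applications of Doob's `L^p` maximal inequality for one-parameter filtrations give the
bound with `C_p = q²`, `q = p/(p-1)`. Doob's inequality itself comes from the weak-type maximal
inequality `t μ{M > t} ≤ ∫_{M ≥ t} |f|` via the layer-cake formula and Hölder's inequality,
after truncating `M` so that its `L^p` norm is finite.
-/

open MeasureTheory ENNReal

/-- The σ-algebra `ℱ_{i,∞} = ⋁_j ℱ_{i,j}`. -/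
def rowSup {Ω : Type*} (𝓕 : ℕ → ℕ → MeasurableSpace Ω) (i : ℕ) : MeasurableSpace Ω :=
  ⨆ j, 𝓕 i j

/-- The σ-algebra `ℱ_{∞,j} = ⋁_i ℱ_{i,j}`. -/
def colSup {Ω : Type*} (𝓕 : ℕ → ℕ → MeasurableSpace Ω) (j : ℕ) : MeasurableSpace Ω :=
  ⨆ i, 𝓕 i j

/-- A two-parameter filtration satisfying the (F4) condition:
`𝔼_{i,j} 𝔼_{k,l} = 𝔼_{min(i,k),min(j,l)} = 𝔼_{k,l} 𝔼_{i,j}` as operators on `L¹`. -/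
structure IsF4Filtration {Ω : Type*} [m0 : MeasurableSpace Ω] (μ : Measure Ω)
    (𝓕 : ℕ → ℕ → MeasurableSpace Ω) : Prop where
  le : ∀ i j, 𝓕 i j ≤ m0
  mono_left : ∀ i j, 𝓕 i j ≤ 𝓕 (i + 1) j
  mono_right : ∀ i j, 𝓕 i j ≤ 𝓕 i (j + 1)
  f4 : ∀ i j k l : ℕ, ∀ f : Ω → ℝ, Integrable f μ →
    μ[μ[f|𝓕 k l]|𝓕 i j] =ᵐ[μ] μ[f|𝓕 (min i k) (min j l)]

open Set Filter
open scoped NNReal Topology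

theorem eLpNorm_ofReal_eq_lintegral_rpow_enorm {Ω ε : Type*} [MeasurableSpace Ω] [ENorm ε]
    {μ : Measure Ω} {p : ℝ} (hp : 0 < p) (f : Ω → ε) :
    eLpNorm f (ENNReal.ofReal p) μ = (∫⁻ ω, ‖f ω‖ₑ ^ p ∂μ) ^ (1 / p) := by
  rw [eLpNorm_eq_lintegral_rpow_enorm_toReal (by simpa using hp) ofReal_ne_top,
    toReal_ofReal hp.le]

theorem ae_lt_top_of_eLpNorm_lt_top {Ω : Type*} [MeasurableSpace Ω] {μ : Measure Ω}
    {g : Ω → ℝ≥0∞} (hg : AEMeasurable g μ) {p : ℝ≥0∞} (hp0 : p ≠ 0) (hp : p ≠ ∞)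
    (h : eLpNorm g p μ < ∞) : ∀ᵐ ω ∂μ, g ω < ∞ := by
  filter_upwards [ae_lt_top' (hg.pow_const _)
    (lintegral_rpow_enorm_lt_top_of_eLpNorm_lt_top hp0 hp h).ne] with ω hω
  exact (ENNReal.rpow_lt_top_iff_of_pos (toReal_pos hp0 hp)).mp hω

theorem ENNReal.iSup_rpow {ι : Sort*} (a : ι → ℝ≥0∞) {r : ℝ} (hr : 0 < r) :
    (⨆ i, a i) ^ r = ⨆ i, a i ^ r :=
  (orderIsoRpow r hr).map_iSup a

section WeakToStrong

variable {Ω : Type*} [MeasurableSpace Ω] {p q : ℝ}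

theorem lintegral_rpow_le_of_mul_meas_lt_le (μ ν : Measure Ω) (hpq : p.HolderConjugate q)
    {g : Ω → ℝ} (hg : Measurable g) (hg0 : 0 ≤ g)
    (hweak : ∀ t : ℝ, 0 < t → ENNReal.ofReal t * μ {ω | t < g ω} ≤ ν {ω | t ≤ g ω}) :
    ∫⁻ ω, ENNReal.ofReal (g ω ^ p) ∂μ ≤
      ENNReal.ofReal q * ∫⁻ ω, ENNReal.ofReal (g ω ^ (p - 1)) ∂ν := by
  have hp1 : 0 < p - 1 := sub_pos.mpr hpq.lt
  rw [lintegral_rpow_eq_lintegral_meas_lt_mul μ (ae_of_all _ hg0) hg.aemeasurable hpq.pos,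
    lintegral_rpow_eq_lintegral_meas_le_mul ν (ae_of_all _ hg0) hg.aemeasurable hp1, ← mul_assoc,
    ← ENNReal.ofReal_mul hpq.symm.nonneg, mul_comm q, hpq.sub_one_mul_conj]
  refine mul_le_mul_right (setLIntegral_mono' measurableSet_Ioi fun t (ht : 0 < t) => ?_) _
  have hsplit :
      ENNReal.ofReal (t ^ (p - 1)) = ENNReal.ofReal t * ENNReal.ofReal (t ^ (p - 1 - 1)) := by
    rw [← ENNReal.ofReal_mul ht.le, mul_comm, ← Real.rpow_add_one ht.ne', sub_add_cancel]
  calc μ {ω | t < g ω} * ENNReal.ofReal (t ^ (p - 1))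
      = ENNReal.ofReal t * μ {ω | t < g ω} * ENNReal.ofReal (t ^ (p - 1 - 1)) := by
        rw [hsplit]; ring
    _ ≤ ν {ω | t ≤ g ω} * ENNReal.ofReal (t ^ (p - 1 - 1)) := mul_le_mul_left (hweak t ht) _

theorem ENNReal.rpow_one_div_le_of_le_mul_rpow {a c : ℝ≥0∞} (hpq : p.HolderConjugate q)
    (ha : a ≠ ∞) (h : a ≤ c * a ^ (1 / q)) : a ^ (1 / p) ≤ c := by
  rcases eq_or_ne a 0 with rfl | ha0
  · rw [ENNReal.zero_rpow_of_pos (one_div_pos.mpr hpq.pos)]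
    exact zero_le
  have hsplit : a ^ (1 / p) * a ^ (1 / q) = a := by
    rw [← ENNReal.rpow_add _ _ ha0 ha, hpq.one_div_add_one_div, one_div_one, ENNReal.rpow_one]
  refine (ENNReal.mul_le_mul_iff_left ?_ ?_).mp (hsplit.trans_le h)
  · exact (ENNReal.rpow_pos (pos_iff_ne_zero.mpr ha0) ha).ne'
  · exact ENNReal.rpow_ne_top_of_nonneg (one_div_nonneg.mpr hpq.symm.nonneg) ha

theorem rpow_lintegral_rpow_le_of_lintegral_ne_top (μ : Measure Ω) (hpq : p.HolderConjugate q)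
    {g : Ω → ℝ} (hg : Measurable g) (hg0 : 0 ≤ g) {F : Ω → ℝ≥0∞} (hF : AEMeasurable F μ)
    (hweak : ∀ t : ℝ, 0 < t →
      ENNReal.ofReal t * μ {ω | t < g ω} ≤ ∫⁻ ω in {ω | t ≤ g ω}, F ω ∂μ)
    (hfin : ∫⁻ ω, ENNReal.ofReal (g ω ^ p) ∂μ ≠ ∞) :
    (∫⁻ ω, ENNReal.ofReal (g ω ^ p) ∂μ) ^ (1 / p) ≤
      ENNReal.ofReal q * (∫⁻ ω, F ω ^ p ∂μ) ^ (1 / p) := by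
  have hG : AEMeasurable (fun ω => ENNReal.ofReal (g ω ^ (p - 1))) μ :=
    (hg.pow_const _).ennreal_ofReal.aemeasurable
  have hGq : ∫⁻ ω, ENNReal.ofReal (g ω ^ (p - 1)) ^ q ∂μ =
      ∫⁻ ω, ENNReal.ofReal (g ω ^ p) ∂μ := by
    refine lintegral_congr fun ω => ?_
    rw [ENNReal.ofReal_rpow_of_nonneg (Real.rpow_nonneg (hg0 ω) _) hpq.symm.nonneg,
      ← Real.rpow_mul (hg0 ω), hpq.sub_one_mul_conj]
  have hlayer := lintegral_rpow_le_of_mul_meas_lt_le μ (μ.withDensity F) hpq hg hg0 fun t ht => by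
    rw [withDensity_apply _ (measurableSet_le measurable_const hg)]
    exact hweak t ht
  rw [lintegral_withDensity_eq_lintegral_mul₀ hF hG] at hlayer
  refine ENNReal.rpow_one_div_le_of_le_mul_rpow hpq hfin (hlayer.trans ?_)
  rw [mul_assoc, ← hGq]
  exact mul_le_mul_right (ENNReal.lintegral_mul_le_Lp_mul_Lq μ hpq hF hG) _

theorem rpow_lintegral_rpow_le_of_mul_meas_lt_le {μ : Measure Ω} [IsFiniteMeasure μ]
    (hpq : p.HolderConjugate q) {g : Ω → ℝ≥0∞} (hg : Measurable g) {F : Ω → ℝ≥0∞}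
    (hF : AEMeasurable F μ)
    (hweak : ∀ t : ℝ≥0, t * μ {ω | t < g ω} ≤ ∫⁻ ω in {ω | t ≤ g ω}, F ω ∂μ) :
    (∫⁻ ω, g ω ^ p ∂μ) ^ (1 / p) ≤ ENNReal.ofReal q * (∫⁻ ω, F ω ^ p ∂μ) ^ (1 / p) := by
  have hweak_inf (c : ℝ≥0∞) (t : ℝ≥0) :
      t * μ {ω | t < g ω ⊓ c} ≤ ∫⁻ ω in {ω | t ≤ g ω ⊓ c}, F ω ∂μ := by
    by_cases htc : (t : ℝ≥0∞) < c
    · simpa only [lt_inf_iff, le_inf_iff, htc, htc.le, and_true] using hweak t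
    · simp [lt_inf_iff, htc]
  have htrunc (c : ℕ) :
      (∫⁻ ω, (g ω ⊓ c) ^ p ∂μ) ^ (1 / p) ≤ ENNReal.ofReal q * (∫⁻ ω, F ω ^ p ∂μ) ^ (1 / p) := by
    have hc (ω : Ω) : g ω ⊓ c ≠ ∞ := ne_top_of_le_ne_top (natCast_ne_top c) inf_le_right
    have hpow (ω : Ω) : ENNReal.ofReal ((g ω ⊓ c).toReal ^ p) = (g ω ⊓ c) ^ p := by
      rw [← ENNReal.ofReal_rpow_of_nonneg toReal_nonneg hpq.nonneg, ofReal_toReal (hc ω)]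
    simp_rw [← hpow]
    refine rpow_lintegral_rpow_le_of_lintegral_ne_top μ hpq
      (hg.min measurable_const).ennreal_toReal (fun _ => toReal_nonneg) hF (fun t ht => ?_) ?_
    · simp_rw [← ENNReal.ofReal_lt_iff_lt_toReal ht.le (hc _),
        ← ENNReal.ofReal_le_iff_le_toReal (hc _)]
      exact hweak_inf c t.toNNReal
    · simp_rw [hpow]
      exact ne_top_of_le_ne_top (lintegral_const_lt_top (rpow_ne_top_of_nonneg hpq.nonneg
        (natCast_ne_top c))).ne (lintegral_mono fun ω => rpow_le_rpow inf_le_right hpq.nonneg)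
  have hg_trunc (ω : Ω) : g ω ^ p = ⨆ c : ℕ, (g ω ⊓ c) ^ p := by
    rw [← ENNReal.iSup_rpow _ hpq.pos, ← inf_iSup_eq, iSup_natCast, inf_top_eq]
  have hmono : Monotone fun (c : ℕ) ω => (g ω ⊓ c) ^ p := fun a b hab ω =>
    rpow_le_rpow (inf_le_inf_left _ (by exact_mod_cast hab)) hpq.nonneg
  rw [lintegral_congr hg_trunc,
    lintegral_iSup (fun c => (hg.min measurable_const).pow_const p) hmono,
    ENNReal.iSup_rpow _ (one_div_pos.mpr hpq.pos)]
  exact iSup_le htrunc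

end WeakToStrong

section Doob

variable {Ω : Type*} {m0 : MeasurableSpace Ω} {μ : Measure Ω}

theorem MeasureTheory.Martingale.submartingale_norm {ι : Type*} [Preorder ι] {ℱ : Filtration ι m0}
    {f : ι → Ω → ℝ} (hf : Martingale f ℱ μ) : Submartingale (fun i ω => ‖f i ω‖) ℱ μ :=
  hf.submartingale.sup hf.neg.submartingale

variable [IsFiniteMeasure μ]

theorem mul_meas_lt_iSup_enorm_condExp_le (𝒢 : Filtration ℕ m0) {f : Ω → ℝ}
    (hf : Integrable f μ) (t : ℝ≥0) :
    t * μ {ω | t < ⨆ n, ‖(μ[f|𝒢 n]) ω‖ₑ} ≤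
      ∫⁻ ω in {ω | t ≤ ⨆ n, ‖(μ[f|𝒢 n]) ω‖ₑ}, ‖f ω‖ₑ ∂μ := by
  set ψ : ℕ → Ω → ℝ := fun n ω => ‖(μ[f|𝒢 n]) ω‖
  have hψ : Submartingale ψ 𝒢 μ := (martingale_condExp f 𝒢 μ).submartingale_norm
  set A : ℕ → Set Ω := fun n =>
    {ω | (t : ℝ) ≤ (Finset.range (n + 1)).sup' Finset.nonempty_range_add_one fun k => ψ k ω}
  have hA_meas (n : ℕ) : MeasurableSet[𝒢 n] (A n) := by
    let : MeasurableSpace Ω := 𝒢 n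
    exact measurableSet_le measurable_const (Finset.measurable_range_sup'' fun k hk =>
      ((hψ.stronglyMeasurable k).mono (𝒢.mono hk)).measurable)
  have hA (n : ℕ) : (t : ℝ≥0∞) * μ (A n) ≤ ∫⁻ ω in A n, ‖f ω‖ₑ ∂μ :=
    calc (t : ℝ≥0∞) * μ (A n) ≤ ENNReal.ofReal (∫ ω in A n, ψ n ω ∂μ) :=
          maximal_ineq hψ (fun _ _ => norm_nonneg _) n
      _ ≤ ENNReal.ofReal (∫ ω in A n, |f ω| ∂μ) :=
          ENNReal.ofReal_le_ofReal (setIntegral_abs_condExp_le (hA_meas n) f)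
      _ = ∫⁻ ω in A n, ‖f ω‖ₑ ∂μ := by
          rw [ofReal_integral_eq_lintegral_ofReal hf.abs.integrableOn
            (ae_of_all _ fun _ => abs_nonneg _)]
          simp_rw [Real.enorm_eq_ofReal_abs]
  have hA_mono : Monotone A := fun a b hab ω (hω : (t : ℝ) ≤ _) => show (t : ℝ) ≤ _ from
    hω.trans (Finset.sup'_mono _ (Finset.range_subset_range.mpr (by omega)) _)
  have hsub_lt : {ω | (t : ℝ≥0∞) < ⨆ n, ‖(μ[f|𝒢 n]) ω‖ₑ} ⊆ ⋃ n, A n := by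
    intro ω (hω : (t : ℝ≥0∞) < _)
    obtain ⟨k, hk⟩ := lt_iSup_iff.mp hω
    rw [enorm_eq_nnnorm, ENNReal.coe_lt_coe, ← NNReal.coe_lt_coe, coe_nnnorm] at hk
    exact mem_iUnion.mpr
      ⟨k, hk.le.trans (Finset.le_sup' (fun j => ψ j ω) (Finset.self_mem_range_succ k))⟩
  have hsub_le (n : ℕ) : A n ⊆ {ω | (t : ℝ≥0∞) ≤ ⨆ n, ‖(μ[f|𝒢 n]) ω‖ₑ} := by
    intro ω (hω : (t : ℝ) ≤ _)
    obtain ⟨k, -, hk⟩ :=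
      Finset.exists_mem_eq_sup' (Finset.nonempty_range_add_one (n := n)) fun j => ψ j ω
    refine le_trans ?_ (le_iSup (fun j => ‖(μ[f|𝒢 j]) ω‖ₑ) k)
    rw [enorm_eq_nnnorm, ENNReal.coe_le_coe, ← NNReal.coe_le_coe, coe_nnnorm]
    exact hω.trans_eq hk
  calc (t : ℝ≥0∞) * μ {ω | t < ⨆ n, ‖(μ[f|𝒢 n]) ω‖ₑ} ≤ t * μ (⋃ n, A n) := by
        gcongr
    _ = ⨆ n, t * μ (A n) := by rw [hA_mono.measure_iUnion, ENNReal.mul_iSup]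
    _ ≤ ⨆ n, ∫⁻ ω in A n, ‖f ω‖ₑ ∂μ := iSup_mono hA
    _ ≤ _ := iSup_le fun n => lintegral_mono_set (hsub_le n)

theorem eLpNorm_iSup_enorm_condExp_le (𝒢 : Filtration ℕ m0) {p q : ℝ} (hpq : p.HolderConjugate q)
    (f : Ω → ℝ) :
    eLpNorm (fun ω => ⨆ n, ‖(μ[f|𝒢 n]) ω‖ₑ) (ENNReal.ofReal p) μ ≤
      ENNReal.ofReal q * eLpNorm f (ENNReal.ofReal p) μ := by
  by_cases hf : Integrable f μ
  swap
  · simp [condExp_of_not_integrable hf]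
  rw [eLpNorm_ofReal_eq_lintegral_rpow_enorm hpq.pos,
    eLpNorm_ofReal_eq_lintegral_rpow_enorm hpq.pos]
  exact rpow_lintegral_rpow_le_of_mul_meas_lt_le hpq
    (Measurable.iSup fun n => (stronglyMeasurable_condExp.mono (𝒢.le n)).measurable.enorm)
    hf.1.enorm (mul_meas_lt_iSup_enorm_condExp_le 𝒢 hf)

theorem exists_memLp_abs_condExp_le (𝒢 : Filtration ℕ m0) {p q : ℝ} (hpq : p.HolderConjugate q)
    {f : Ω → ℝ} (hf : MemLp f (ENNReal.ofReal p) μ) :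
    ∃ S : Ω → ℝ, MemLp S (ENNReal.ofReal p) μ ∧
      eLpNorm S (ENNReal.ofReal p) μ ≤ ENNReal.ofReal q * eLpNorm f (ENNReal.ofReal p) μ ∧
      ∀ n, |μ[f|𝒢 n]| ≤ᵐ[μ] S := by
  set M : Ω → ℝ≥0∞ := fun ω => ⨆ n, ‖(μ[f|𝒢 n]) ω‖ₑ
  have hM := eLpNorm_iSup_enorm_condExp_le (μ := μ) 𝒢 hpq f
  have hM_lt_top : eLpNorm M (ENNReal.ofReal p) μ < ∞ :=
    hM.trans_lt (mul_lt_top ofReal_lt_top hf.eLpNorm_lt_top)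
  have hM_meas : Measurable M := Measurable.iSup fun n =>
    (stronglyMeasurable_condExp.mono (𝒢.le n)).measurable.enorm
  have hM_fin : ∀ᵐ ω ∂μ, M ω < ∞ := ae_lt_top_of_eLpNorm_lt_top hM_meas.aemeasurable
    (by simpa using hpq.pos) ofReal_ne_top hM_lt_top
  have hSM :
      eLpNorm (fun ω => (M ω).toReal) (ENNReal.ofReal p) μ ≤ eLpNorm M (ENNReal.ofReal p) μ :=
    eLpNorm_mono_enorm fun ω => by
      rw [Real.enorm_eq_ofReal toReal_nonneg]
      exact ofReal_toReal_le
  refine ⟨fun ω => (M ω).toReal, ⟨hM_meas.ennreal_toReal.aestronglyMeasurable,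
    hSM.trans_lt hM_lt_top⟩, hSM.trans hM, fun n => hM_fin.mono fun ω hω => ?_⟩
  calc |(μ[f|𝒢 n]) ω|
    _ = ‖(μ[f|𝒢 n]) ω‖ₑ.toReal := by rw [toReal_enorm, Real.norm_eq_abs]
    _ ≤ (M ω).toReal := toReal_mono hω.ne (le_iSup (fun n => ‖(μ[f|𝒢 n]) ω‖ₑ) n)

end Doob

section LevyUpward

variable {Ω : Type*} {m0 : MeasurableSpace Ω} {μ : Measure Ω}

theorem condExp_ae_eq_of_tendsto_eLpNorm_one {m : MeasurableSpace Ω} {g : ℕ → Ω → ℝ}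
    {G h : Ω → ℝ} (hg : ∀ k, Integrable (g k) μ) (hG : Integrable G μ)
    (hlim : Tendsto (fun k => eLpNorm (g k - G) 1 μ) atTop (𝓝 0))
    (hev : ∀ᶠ k in atTop, μ[g k|m] =ᵐ[μ] h) : μ[G|m] =ᵐ[μ] h := by
  obtain ⟨k, hk⟩ := hev.exists
  have hzero : eLpNorm (μ[G|m] - h) 1 μ = 0 := by
    refine le_antisymm (ge_of_tendsto hlim (hev.mono fun k hk => ?_)) zero_le
    calc eLpNorm (μ[G|m] - h) 1 μ = eLpNorm (μ[G - g k|m]) 1 μ :=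
          eLpNorm_congr_ae ((EventuallyEq.rfl.sub hk.symm).trans (condExp_sub hG (hg k) m).symm)
      _ ≤ eLpNorm (G - g k) 1 μ := eLpNorm_condExp_le_eLpNorm _ le_rfl
      _ = eLpNorm (g k - G) 1 μ := eLpNorm_sub_comm _ _ _ _
  rw [eLpNorm_eq_zero_iff (integrable_condExp.1.sub (integrable_condExp.1.congr hk)) one_ne_zero]
    at hzero
  exact hzero.mono fun ω hω => sub_eq_zero.mp hω

theorem condExp_iSup_ae_eq_of_eventually [IsFiniteMeasure μ] (ℱ : Filtration ℕ m0)
    {g h : Ω → ℝ} (hev : ∀ᶠ j in atTop, μ[g|ℱ j] =ᵐ[μ] h) : μ[g|⨆ j, ℱ j] =ᵐ[μ] h := by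
  obtain ⟨N, hN⟩ := eventually_atTop.mp hev
  have hN' : ∀ᵐ ω ∂μ, ∀ j, (μ[g|ℱ (j + N)]) ω = h ω := ae_all_iff.mpr fun j => hN _ le_add_self
  filter_upwards [tendsto_ae_condExp (ℱ := ℱ) g, hN'] with ω hlim hω
  refine tendsto_nhds_unique ((tendsto_add_atTop_iff_nat N).mpr hlim) ?_
  simp_rw [hω]
  exact tendsto_const_nhds

end LevyUpward

namespace IsF4Filtration

variable {Ω : Type*} [m0 : MeasurableSpace Ω] {μ : Measure Ω} {𝓕 : ℕ → ℕ → MeasurableSpace Ω}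

def rowFiltration (h : IsF4Filtration μ 𝓕) (i : ℕ) : Filtration ℕ m0 :=
  ⟨fun j => 𝓕 i j, monotone_nat_of_le_succ (h.mono_right i), h.le i⟩

def colFiltration (h : IsF4Filtration μ 𝓕) (j : ℕ) : Filtration ℕ m0 :=
  ⟨fun i => 𝓕 i j, monotone_nat_of_le_succ fun i => h.mono_left i j, fun i => h.le i j⟩

def rowSupFiltration (h : IsF4Filtration μ 𝓕) : Filtration ℕ m0 :=
  ⟨rowSup 𝓕, monotone_nat_of_le_succ fun i => iSup_mono (h.mono_left i), fun i => iSup_le (h.le i)⟩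

def colSupFiltration (h : IsF4Filtration μ 𝓕) : Filtration ℕ m0 :=
  ⟨colSup 𝓕, monotone_nat_of_le_succ fun j => iSup_mono fun i => h.mono_right i j,
    fun j => iSup_le fun i => h.le i j⟩

variable [IsFiniteMeasure μ]

theorem condExp_rowSup_condExp_colSup (h : IsF4Filtration μ 𝓕) {f : Ω → ℝ}
    (hf : Integrable f μ) (n m : ℕ) :
    μ[μ[f|colSup 𝓕 m]|rowSup 𝓕 n] =ᵐ[μ] μ[f|𝓕 n m] := by
  have hrow (j : ℕ) (hj : m ≤ j) : μ[μ[f|colSup 𝓕 m]|𝓕 n j] =ᵐ[μ] μ[f|𝓕 n m] :=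
    condExp_ae_eq_of_tendsto_eLpNorm_one (fun _ => integrable_condExp) integrable_condExp
      (tendsto_eLpNorm_condExp (ℱ := h.colFiltration m) f)
      ((eventually_ge_atTop n).mono fun k hk => by
        have hF4 := h.f4 n j k m f hf
        rwa [min_eq_left hk, min_eq_right hj] at hF4)
  exact condExp_iSup_ae_eq_of_eventually (h.rowFiltration n) ((eventually_ge_atTop m).mono hrow)

theorem ae_iSup_iSup_enorm_condExp_le (h : IsF4Filtration μ 𝓕) {f S : Ω → ℝ}
    (hf : Integrable f μ) (hS : Integrable S μ) (hfS : ∀ m, |μ[f|colSup 𝓕 m]| ≤ᵐ[μ] S) :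
    ∀ᵐ ω ∂μ, ⨆ n, ⨆ m, ‖(μ[f|𝓕 n m]) ω‖ₑ ≤ ⨆ n, ‖(μ[S|rowSup 𝓕 n]) ω‖ₑ := by
  have hnm (n m : ℕ) : |μ[f|𝓕 n m]| ≤ᵐ[μ] μ[S|rowSup 𝓕 n] := by
    filter_upwards [h.condExp_rowSup_condExp_colSup hf n m,
      abs_condExp_ae_le_condExp_abs (m := rowSup 𝓕 n) (μ := μ) (μ[f|colSup 𝓕 m]),
      condExp_mono (m := rowSup 𝓕 n) integrable_condExp.abs hS (hfS m)] with ω hrc habs hmono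
    simp only [Pi.abs_apply, ← hrc] at habs ⊢
    exact habs.trans hmono
  filter_upwards [ae_all_iff.mpr fun n => ae_all_iff.mpr (hnm n)] with ω hω
  refine iSup_le fun n => iSup_le fun m => le_iSup_of_le n ?_
  rw [Real.enorm_eq_ofReal_abs, Real.enorm_eq_ofReal_abs]
  exact ENNReal.ofReal_le_ofReal ((hω n m).trans (le_abs_self _))

end IsF4Filtration

/-- An (F4) two-parameter filtration has the Doob property: for each
`p ∈ (1,∞)` there is a constant `C_p`, depending only on `p`, such that
`‖sup_{n,m} 𝔼_{n,m}|X|‖_{L^p} ≤ C_p ‖X‖_{L^p}` for all `X ∈ L^p`. -/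
theorem f4_doob_property :
    ∀ p : ℝ, 1 < p →
      ∃ C : ℝ≥0∞, C ≠ ∞ ∧
        ∀ (Ω : Type*) [MeasurableSpace Ω] (μ : Measure Ω) [IsProbabilityMeasure μ]
          (𝓕 : ℕ → ℕ → MeasurableSpace Ω), IsF4Filtration μ 𝓕 →
          ∀ X : Ω → ℝ, MemLp X (ENNReal.ofReal p) μ →
            (∫⁻ ω, (⨆ n, ⨆ m, (‖(μ[(fun a => |X a|) | 𝓕 n m]) ω‖₊ : ℝ≥0∞)) ^ p ∂μ) ^ (1/p) ≤
              C * eLpNorm X (ENNReal.ofReal p) μ := by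
  intro p hp
  have hpq := Real.HolderConjugate.conjExponent hp
  set q := p.conjExponent
  refine ⟨ENNReal.ofReal q * ENNReal.ofReal q, mul_ne_top ofReal_ne_top ofReal_ne_top, ?_⟩
  intro Ω _ μ _ 𝓕 h X hX
  have hp1 : 1 ≤ ENNReal.ofReal p := by simpa using hp.le
  obtain ⟨S, hS, hS_le, hXS⟩ := exists_memLp_abs_condExp_le h.colSupFiltration hpq hX.abs
  have hdom := h.ae_iSup_iSup_enorm_condExp_le (hX.integrable hp1).abs (hS.integrable hp1) hXS
  calc (∫⁻ ω, (⨆ n, ⨆ m, (‖(μ[(fun a => |X a|) | 𝓕 n m]) ω‖₊ : ℝ≥0∞)) ^ p ∂μ) ^ (1/p)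
    _ = eLpNorm (fun ω => ⨆ n, ⨆ m, ‖(μ[|X| | 𝓕 n m]) ω‖ₑ) (ENNReal.ofReal p) μ :=
        (eLpNorm_ofReal_eq_lintegral_rpow_enorm hpq.pos
          (fun ω => ⨆ n, ⨆ m, ‖(μ[|X| | 𝓕 n m]) ω‖ₑ)).symm
    _ ≤ eLpNorm (fun ω => ⨆ n, ‖(μ[S|rowSup 𝓕 n]) ω‖ₑ) (ENNReal.ofReal p) μ :=
        eLpNorm_mono_enorm_ae hdom
    _ ≤ ENNReal.ofReal q * eLpNorm S (ENNReal.ofReal p) μ :=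
        eLpNorm_iSup_enorm_condExp_le h.rowSupFiltration hpq S
    _ ≤ ENNReal.ofReal q * (ENNReal.ofReal q * eLpNorm X (ENNReal.ofReal p) μ) := by
        rw [← eLpNorm_norm X]
        exact mul_le_mul_right hS_le _
    _ = ENNReal.ofReal q * ENNReal.ofReal q * eLpNorm X (ENNReal.ofReal p) μ :=
        (mul_assoc _ _ _).symm
end

section
/- Let (ℱ_k)_{k≥0} be a (one-parameter) filtration and q ≥ 1. For any sequence (Y_k) of nonnegative random variables with Y_k ∈ L^q and Y_k ℱ_k-measurable for each k, one has, with two-sided constants depending only on q: 𝔼[(Σ_k Y_k)^q] ≃ 𝔼[Σ_k Y_k^q] + 𝔼[(Σ_k 𝔼_{k−1} Y_k)^q]. -/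
/-!
Write `S_N = ∑_{k<N} Y_k` and `A_N = ∑_{k<N} 𝔼_{k-1} Y_k`. The convexity inequality
`(x + d)^q ≤ x^q + q (x + d)^{q-1} d` telescopes to `S_N^q ≤ q ∑_{k<N} S_{k+1}^{q-1} Y_k`, and
likewise for `A_N`. Since `A_{k+1}` is `ℱ_{k-1}`-measurable, the conditional expectations can be
removed under the integral, and Hölder gives `𝔼 A_N^q ≤ q (𝔼 A_N^q)^{1-1/q} (𝔼 S^q)^{1/q}`;
as `Y_k ∈ L^q`, `𝔼 A_N^q` is finite and can be divided out. For `S_N` one first splits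
`S_{k+1}^{q-1} ≲ S_k^{q-1} + Y_k^{q-1}`, which makes the weight predictable, and the same argument
gives `𝔼 S_N^q ≲ 𝔼 ∑ Y_k^q + (𝔼 S_N^q)^{1-1/q} (𝔼 A^q)^{1/q}`, from which `𝔼 S_N^q` is again
absorbed. Monotone convergence lets `N → ∞`, and `∑ Y_k^q ≤ S^q` holds pointwise. For `q = 1` all
three quantities coincide.
-/

open MeasureTheory ENNReal Finset

theorem Real.add_rpow_le_rpow_add_mul_rpow {q a d : ℝ} (hq : 1 ≤ q) (ha : 0 ≤ a) (hd : 0 ≤ d) :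
    (a + d) ^ q ≤ a ^ q + q * (a + d) ^ (q - 1) * d := by
  rcases (add_nonneg ha hd).eq_or_lt with hb | hb
  · obtain ⟨rfl, rfl⟩ : a = 0 ∧ d = 0 := ⟨by linarith, by linarith⟩
    simp
  -- Bernoulli's inequality at `1 + s = a / (a + d)`
  have hs : -1 ≤ -d / (a + d) := by
    rw [neg_div, neg_le_neg_iff, div_le_one hb]; linarith
  have h := one_add_mul_self_le_rpow_one_add hs hq
  rw [show 1 + -d / (a + d) = a / (a + d) by field_simp; ring, Real.div_rpow ha hb.le,
    le_div_iff₀ (Real.rpow_pos_of_pos hb q)] at h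
  rw [Real.rpow_sub_one hb.ne']
  have : (1 + q * (-d / (a + d))) * (a + d) ^ q =
      (a + d) ^ q - q * ((a + d) ^ q / (a + d)) * d := by
    field_simp; ring
  linarith

namespace ENNReal

theorem add_rpow_le_rpow_add_mul_rpow {q : ℝ} (hq : 1 ≤ q) {x d : ℝ≥0∞} (hx : x ≠ ∞)
    (hd : d ≠ ∞) : (x + d) ^ q ≤ x ^ q + ENNReal.ofReal q * (x + d) ^ (q - 1) * d := by
  obtain ⟨a, ha, rfl⟩ : ∃ a, 0 ≤ a ∧ ENNReal.ofReal a = x :=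
    ⟨x.toReal, toReal_nonneg, ofReal_toReal hx⟩
  obtain ⟨e, he, rfl⟩ : ∃ e, 0 ≤ e ∧ ENNReal.ofReal e = d :=
    ⟨d.toReal, toReal_nonneg, ofReal_toReal hd⟩
  have hae : 0 ≤ a + e := add_nonneg ha he
  rw [← ofReal_add ha he, ofReal_rpow_of_nonneg hae (by linarith),
    ofReal_rpow_of_nonneg ha (by linarith), ofReal_rpow_of_nonneg hae (by linarith),
    ← ofReal_mul (by linarith), ← ofReal_mul (by positivity),
    ← ofReal_add (by positivity) (by positivity)]
  exact ofReal_le_ofReal (Real.add_rpow_le_rpow_add_mul_rpow hq ha he)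

theorem rpow_sub_one_mul_self {q : ℝ} (hq : 1 ≤ q) (x : ℝ≥0∞) : x ^ (q - 1) * x = x ^ q := by
  rcases hq.eq_or_lt with rfl | hq
  · simp
  rcases eq_or_ne x 0 with rfl | hx0
  · simp [zero_rpow_of_pos (by linarith : 0 < q - 1), zero_rpow_of_pos (by linarith : 0 < q)]
  rcases eq_or_ne x ∞ with rfl | hxt
  · simp [top_rpow_of_pos (by linarith : 0 < q - 1), top_rpow_of_pos (by linarith : 0 < q)]
  calc x ^ (q - 1) * x = x ^ (q - 1) * x ^ (1 : ℝ) := by rw [rpow_one]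
    _ = x ^ q := by rw [← rpow_add _ _ hx0 hxt, sub_add_cancel]

theorem add_rpow_le_two_rpow_mul {r : ℝ} (hr : 0 ≤ r) (x y : ℝ≥0∞) :
    (x + y) ^ r ≤ 2 ^ r * (x ^ r + y ^ r) := by
  calc (x + y) ^ r ≤ (2 * max x y) ^ r := by
        gcongr; rw [two_mul]; exact add_le_add (le_max_left x y) (le_max_right x y)
    _ = 2 ^ r * max (x ^ r) (y ^ r) := by rw [mul_rpow_of_nonneg _ _ hr, max_rpow hr]
    _ ≤ 2 ^ r * (x ^ r + y ^ r) := by gcongr; exact max_le le_self_add le_add_self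

theorem tsum_rpow_le_rpow_tsum {ι : Type*} {q : ℝ} (hq : 1 ≤ q) (a : ι → ℝ≥0∞) :
    ∑' k, a k ^ q ≤ (∑' k, a k) ^ q :=
  calc ∑' k, a k ^ q = ∑' k, a k ^ (q - 1) * a k := by simp_rw [rpow_sub_one_mul_self hq]
    _ ≤ ∑' k, (∑' j, a j) ^ (q - 1) * a k := by
        gcongr with k; exact ENNReal.le_tsum k
    _ = (∑' k, a k) ^ q := by rw [ENNReal.tsum_mul_left, rpow_sub_one_mul_self hq]

theorem rpow_sum_range_le_mul_sum_rpow_mul {q : ℝ} (hq : 1 ≤ q) {a : ℕ → ℝ≥0∞}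
    (ha : ∀ k, a k ≠ ∞) (N : ℕ) :
    (∑ k ∈ range N, a k) ^ q ≤
      ENNReal.ofReal q * ∑ k ∈ range N, (∑ j ∈ range (k + 1), a j) ^ (q - 1) * a k := by
  induction N with
  | zero => simp [zero_rpow_of_pos (by linarith : 0 < q)]
  | succ N ih =>
    calc (∑ k ∈ range (N + 1), a k) ^ q
        ≤ (∑ k ∈ range N, a k) ^ q +
            ENNReal.ofReal q * (∑ k ∈ range (N + 1), a k) ^ (q - 1) * a N := by
          rw [sum_range_succ]
          exact add_rpow_le_rpow_add_mul_rpow hq (sum_ne_top.2 fun k _ => ha k) (ha N)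
      _ ≤ _ := by
          rw [sum_range_succ (fun k => (∑ j ∈ range (k + 1), a j) ^ (q - 1) * a k), mul_add,
            ← mul_assoc]
          gcongr

theorem sum_range_rpow_sum_succ_mul_le {q : ℝ} (hq : 1 ≤ q) (a : ℕ → ℝ≥0∞) (N : ℕ) :
    ∑ k ∈ range N, (∑ j ∈ range (k + 1), a j) ^ (q - 1) * a k ≤
      2 ^ (q - 1) * (∑ k ∈ range N, (∑ j ∈ range k, a j) ^ (q - 1) * a k +
        ∑ k ∈ range N, a k ^ q) := by
  rw [← sum_add_distrib, mul_sum]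
  refine sum_le_sum fun k _ => ?_
  calc (∑ j ∈ range (k + 1), a j) ^ (q - 1) * a k
      ≤ 2 ^ (q - 1) * ((∑ j ∈ range k, a j) ^ (q - 1) + a k ^ (q - 1)) * a k := by
        rw [sum_range_succ]; gcongr; exact add_rpow_le_two_rpow_mul (by linarith) _ _
    _ = 2 ^ (q - 1) * ((∑ j ∈ range k, a j) ^ (q - 1) * a k + a k ^ q) := by
        rw [← rpow_sub_one_mul_self hq (a k)]; ring

theorem le_of_le_mul_rpow_add {q : ℝ} (hq : 0 < q) {u v w C : ℝ≥0∞} (hu : u ≠ ∞)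
    (h : u ≤ C * (u ^ (1 - q⁻¹) * w ^ q⁻¹) + v) : u ≤ 2 * v + (2 * C) ^ q * w := by
  rcases le_total (C * (u ^ (1 - q⁻¹) * w ^ q⁻¹)) v with hv | hv
  · exact le_add_right (by rw [two_mul]; exact h.trans (add_le_add hv le_rfl))
  refine le_add_left ?_
  rcases eq_or_ne u 0 with rfl | hu0
  · exact zero_le
  have h2 : u ^ q⁻¹ * u ^ (1 - q⁻¹) ≤ (2 * C * w ^ q⁻¹) * u ^ (1 - q⁻¹) :=
    calc u ^ q⁻¹ * u ^ (1 - q⁻¹) = u := by rw [← rpow_add _ _ hu0 hu, add_sub_cancel, rpow_one]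
      _ ≤ 2 * (C * (u ^ (1 - q⁻¹) * w ^ q⁻¹)) := by
        rw [two_mul]; exact h.trans (add_le_add le_rfl hv)
      _ = (2 * C * w ^ q⁻¹) * u ^ (1 - q⁻¹) := by ring
  have h3 : u ^ q⁻¹ ≤ 2 * C * w ^ q⁻¹ := (ENNReal.mul_le_mul_iff_left
    (by simp [rpow_eq_zero_iff, hu0, hu]) (by simp [rpow_eq_top_iff, hu0, hu])).1 h2
  calc u = (u ^ q⁻¹) ^ q := by rw [← rpow_mul, inv_mul_cancel₀ hq.ne', rpow_one]
    _ ≤ (2 * C * w ^ q⁻¹) ^ q := by gcongr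
    _ = (2 * C) ^ q * w := by
        rw [mul_rpow_of_nonneg _ _ hq.le, ← rpow_mul, inv_mul_cancel₀ hq.ne', rpow_one]

end ENNReal

section Lintegral

variable {Ω : Type*} {m m0 : MeasurableSpace Ω} {μ : Measure Ω}

theorem lintegral_mul_eq_of_forall_setLIntegral_eq (hm : m ≤ m0) {X X' g : Ω → ℝ≥0∞}
    (hX : AEMeasurable X μ) (hX' : AEMeasurable X' μ) (hg : Measurable[m] g)
    (h : ∀ s, MeasurableSet[m] s → ∫⁻ ω in s, X ω ∂μ = ∫⁻ ω in s, X' ω ∂μ) :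
    ∫⁻ ω, g ω * X ω ∂μ = ∫⁻ ω, g ω * X' ω ∂μ := by
  have htrim : (μ.withDensity X).trim hm = (μ.withDensity X').trim hm := by
    refine @Measure.ext Ω m _ _ fun s hs => ?_
    rw [trim_measurableSet_eq hm hs, trim_measurableSet_eq hm hs,
      withDensity_apply _ (hm s hs), withDensity_apply _ (hm s hs), h s hs]
  have hg' : Measurable g := hg.mono hm le_rfl
  calc ∫⁻ ω, g ω * X ω ∂μ = ∫⁻ ω, g ω ∂(μ.withDensity X).trim hm := by
        rw [lintegral_trim hm hg, lintegral_withDensity_eq_lintegral_mul₀ hX hg'.aemeasurable]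
        simp only [Pi.mul_apply, mul_comm]
    _ = ∫⁻ ω, g ω * X' ω ∂μ := by
        rw [htrim, lintegral_trim hm hg,
          lintegral_withDensity_eq_lintegral_mul₀ hX' hg'.aemeasurable]
        simp only [Pi.mul_apply, mul_comm]

theorem lintegral_mul_ofReal_condExp (hm : m ≤ m0) [SigmaFinite (μ.trim hm)] {f : Ω → ℝ}
    (hf : Integrable f μ) (hf0 : 0 ≤ᵐ[μ] f) {g : Ω → ℝ≥0∞} (hg : Measurable[m] g) :
    ∫⁻ ω, g ω * ENNReal.ofReal (μ[f|m] ω) ∂μ = ∫⁻ ω, g ω * ENNReal.ofReal (f ω) ∂μ := by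
  refine lintegral_mul_eq_of_forall_setLIntegral_eq hm
    (stronglyMeasurable_condExp.mono hm).measurable.ennreal_ofReal.aemeasurable
    hf.aemeasurable.ennreal_ofReal hg fun s hs => ?_
  rw [← ofReal_integral_eq_lintegral_ofReal integrable_condExp.restrict
      (ae_restrict_of_ae (condExp_nonneg hf0)),
    ← ofReal_integral_eq_lintegral_ofReal hf.restrict (ae_restrict_of_ae hf0),
    setIntegral_condExp hm hf hs]

theorem lintegral_rpow_sub_one_mul_le {q : ℝ} (hq : 1 < q) {F G : Ω → ℝ≥0∞}
    (hF : AEMeasurable F μ) (hG : AEMeasurable G μ) :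
    ∫⁻ ω, F ω ^ (q - 1) * G ω ∂μ ≤
      (∫⁻ ω, F ω ^ q ∂μ) ^ (1 - q⁻¹) * (∫⁻ ω, G ω ^ q ∂μ) ^ q⁻¹ := by
  have hpq := (Real.HolderConjugate.conjExponent hq).symm
  have h := ENNReal.lintegral_mul_le_Lp_mul_Lq μ hpq (hF.pow_const (q - 1)) hG
  simp_rw [← rpow_mul, hpq.symm.sub_one_mul_conj, one_div] at h
  rwa [hpq.symm.one_sub_inv]

theorem lintegral_sum_rpow_mul_le {ι : Type*} [Countable ι] {q : ℝ} (hq : 1 < q) {s : Finset ι}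
    {F : Ω → ℝ≥0∞} {H z : ι → Ω → ℝ≥0∞} (hF : AEMeasurable F μ) (hz : ∀ k, AEMeasurable (z k) μ)
    (hHF : ∀ k ∈ s, ∀ ω, H k ω ≤ F ω) :
    ∫⁻ ω, ∑ k ∈ s, H k ω ^ (q - 1) * z k ω ∂μ ≤
      (∫⁻ ω, F ω ^ q ∂μ) ^ (1 - q⁻¹) * (∫⁻ ω, (∑' k, z k ω) ^ q ∂μ) ^ q⁻¹ := by
  refine le_trans (lintegral_mono fun ω => ?_)
    (lintegral_rpow_sub_one_mul_le hq hF (AEMeasurable.tsum hz))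
  calc ∑ k ∈ s, H k ω ^ (q - 1) * z k ω ≤ ∑ k ∈ s, F ω ^ (q - 1) * z k ω :=
        sum_le_sum fun k hk => by gcongr; exact hHF k hk ω
    _ ≤ F ω ^ (q - 1) * ∑' k, z k ω := by rw [← mul_sum]; gcongr; exact ENNReal.sum_le_tsum _

theorem lintegral_rpow_tsum_le_of_forall_sum_range_le {q : ℝ} (hq : 0 < q) {f : ℕ → Ω → ℝ≥0∞}
    (hf : ∀ k, AEMeasurable (f k) μ) {K : ℝ≥0∞}
    (h : ∀ N, ∫⁻ ω, (∑ k ∈ range N, f k ω) ^ q ∂μ ≤ K) :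
    ∫⁻ ω, (∑' k, f k ω) ^ q ∂μ ≤ K := by
  have hsup : ∀ ω, (∑' k, f k ω) ^ q = ⨆ N, (∑ k ∈ range N, f k ω) ^ q := fun ω => by
    rw [ENNReal.tsum_eq_iSup_nat]; exact (orderIsoRpow q hq).map_iSup _
  simp_rw [hsup]
  rw [lintegral_iSup' (fun N => (Finset.aemeasurable_fun_sum _ fun k _ => hf k).pow_const q)
    (ae_of_all _ fun ω M N hMN =>
      rpow_le_rpow (sum_le_sum_of_subset (range_subset_range.2 hMN)) hq.le)]
  exact iSup_le h

theorem lintegral_rpow_sum_ofReal_lt_top {ι : Type*} {q : ℝ} (hq : 1 ≤ q) {f : ι → Ω → ℝ}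
    (hf : ∀ k, MemLp (f k) (ENNReal.ofReal q) μ) (s : Finset ι) :
    ∫⁻ ω, (∑ k ∈ s, ENNReal.ofReal (f k ω)) ^ q ∂μ < ∞ := by
  have hq0 : ENNReal.ofReal q ≠ 0 := by simp; linarith
  calc ∫⁻ ω, (∑ k ∈ s, ENNReal.ofReal (f k ω)) ^ q ∂μ
      ≤ ∫⁻ ω, (#s : ℝ≥0∞) ^ (q - 1) * ∑ k ∈ s, ‖f k ω‖ₑ ^ q ∂μ := by
        refine lintegral_mono fun ω => (rpow_sum_le_const_mul_sum_rpow s _ hq).trans' ?_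
        gcongr with k
        exact Real.ofReal_le_enorm _
    _ = (#s : ℝ≥0∞) ^ (q - 1) * ∑ k ∈ s, ∫⁻ ω, ‖f k ω‖ₑ ^ q ∂μ := by
        rw [lintegral_const_mul' _ _ (rpow_ne_top_of_nonneg (by linarith) (natCast_ne_top _)),
          lintegral_finsetSum' _ fun k _ => (hf k).1.enorm.pow_const q]
    _ < ∞ := by
        refine mul_lt_top (rpow_lt_top_of_nonneg (by linarith) (natCast_ne_top _))
          (sum_lt_top.2 fun k _ => ?_)
        have h := lintegral_rpow_enorm_lt_top_of_eLpNorm_lt_top hq0 ofReal_ne_top (hf k).2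
        rwa [toReal_ofReal (by linarith)] at h

end Lintegral

section CondExp

variable {Ω : Type*} {m0 : MeasurableSpace Ω} {μ : Measure Ω} [IsFiniteMeasure μ]

theorem lintegral_sum_mul_ofReal_condExp {ι : Type*} {m : ι → MeasurableSpace Ω}
    (hm : ∀ k, m k ≤ m0) {Y : ι → Ω → ℝ} (hY : ∀ k, Integrable (Y k) μ) (hY0 : ∀ k, 0 ≤ᵐ[μ] Y k)
    {H : ι → Ω → ℝ≥0∞} (hH : ∀ k, Measurable[m k] (H k)) (s : Finset ι) :
    ∫⁻ ω, ∑ k ∈ s, H k ω * ENNReal.ofReal (μ[Y k|m k] ω) ∂μ =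
      ∫⁻ ω, ∑ k ∈ s, H k ω * ENNReal.ofReal (Y k ω) ∂μ := by
  have hH' k : AEMeasurable (H k) μ := ((hH k).mono (hm k) le_rfl).aemeasurable
  rw [lintegral_finsetSum', lintegral_finsetSum']
  · exact sum_congr rfl fun k _ => lintegral_mul_ofReal_condExp (hm k) (hY k) (hY0 k) (hH k)
  · exact fun k _ => (hH' k).mul (hY k).aemeasurable.ennreal_ofReal
  · exact fun k _ => (hH' k).mul
      (stronglyMeasurable_condExp.mono (hm k)).measurable.ennreal_ofReal.aemeasurable

theorem lintegral_tsum_ofReal_condExp {ι : Type*} [Countable ι] {m : ι → MeasurableSpace Ω}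
    (hm : ∀ k, m k ≤ m0) {Y : ι → Ω → ℝ} (hY : ∀ k, Integrable (Y k) μ)
    (hY0 : ∀ k, 0 ≤ᵐ[μ] Y k) :
    ∫⁻ ω, ∑' k, ENNReal.ofReal (μ[Y k|m k] ω) ∂μ = ∫⁻ ω, ∑' k, ENNReal.ofReal (Y k ω) ∂μ := by
  rw [lintegral_tsum fun k =>
      (stronglyMeasurable_condExp.mono (hm k)).measurable.ennreal_ofReal.aemeasurable,
    lintegral_tsum fun k => (hY k).aemeasurable.ennreal_ofReal]
  refine tsum_congr fun k => ?_
  simpa using lintegral_mul_ofReal_condExp (hm k) (hY k) (hY0 k) (g := 1) measurable_const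

variable {𝓕 : Filtration ℕ m0} {Y : ℕ → Ω → ℝ} {q : ℝ}

theorem lintegral_rpow_tsum_ofReal_condExp_le (hq : 1 < q) (hY0 : ∀ k, 0 ≤ᵐ[μ] Y k)
    (hY : ∀ k, MemLp (Y k) (ENNReal.ofReal q) μ) :
    ∫⁻ ω, (∑' k, ENNReal.ofReal (μ[Y k|𝓕 (k - 1)] ω)) ^ q ∂μ ≤
      (2 * ENNReal.ofReal q) ^ q * ∫⁻ ω, (∑' k, ENNReal.ofReal (Y k ω)) ^ q ∂μ := by
  have hq1 : 1 ≤ ENNReal.ofReal q := one_le_ofReal.2 hq.le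
  set g : ℕ → Ω → ℝ≥0∞ := fun k ω => ENNReal.ofReal (μ[Y k|𝓕 (k - 1)] ω)
  have hg (j k : ℕ) (hjk : j ≤ k) : Measurable[𝓕 (k - 1)] (g j) :=
    (stronglyMeasurable_condExp.measurable.mono (𝓕.mono (Nat.sub_le_sub_right hjk 1))
      le_rfl).ennreal_ofReal
  have hg' (k : ℕ) : AEMeasurable (g k) μ := ((hg k k le_rfl).mono (𝓕.le _) le_rfl).aemeasurable
  refine lintegral_rpow_tsum_le_of_forall_sum_range_le (by linarith) hg' fun N => ?_
  set u := ∫⁻ ω, (∑ k ∈ range N, g k ω) ^ q ∂μ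
  have hu : u ≠ ∞ :=
    (lintegral_rpow_sum_ofReal_lt_top hq.le (fun k => (hY k).condExp hq1) (range N)).ne
  suffices h : u ≤ ENNReal.ofReal q * (u ^ (1 - q⁻¹) *
      (∫⁻ ω, (∑' k, ENNReal.ofReal (Y k ω)) ^ q ∂μ) ^ q⁻¹) + 0 by
    simpa using le_of_le_mul_rpow_add (by linarith) hu h
  calc u ≤ ∫⁻ ω, ENNReal.ofReal q *
        ∑ k ∈ range N, (∑ j ∈ range (k + 1), g j ω) ^ (q - 1) * g k ω ∂μ :=
        lintegral_mono fun ω => rpow_sum_range_le_mul_sum_rpow_mul hq.le (fun _ => ofReal_ne_top) N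
    _ = ENNReal.ofReal q * ∫⁻ ω,
        ∑ k ∈ range N, (∑ j ∈ range (k + 1), g j ω) ^ (q - 1) * ENNReal.ofReal (Y k ω) ∂μ := by
        rw [lintegral_const_mul' _ _ ofReal_ne_top,
          lintegral_sum_mul_ofReal_condExp (fun k => 𝓕.le _) (fun k => (hY k).integrable hq1) hY0
            fun k => (Finset.measurable_sum _ fun j hj =>
              hg j k (Nat.lt_succ_iff.1 (mem_range.1 hj))).pow_const _]
    _ ≤ ENNReal.ofReal q * (u ^ (1 - q⁻¹) *
        (∫⁻ ω, (∑' k, ENNReal.ofReal (Y k ω)) ^ q ∂μ) ^ q⁻¹) := by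
        gcongr
        exact lintegral_sum_rpow_mul_le hq (Finset.aemeasurable_fun_sum _ fun k _ => hg' k)
          (fun k => (hY k).1.aemeasurable.ennreal_ofReal)
          fun k hk ω => sum_le_sum_of_subset (range_subset_range.2 (mem_range.1 hk))
    _ = _ := (add_zero _).symm

theorem lintegral_rpow_tsum_ofReal_le (hq : 1 < q) (hY0 : ∀ k, 0 ≤ᵐ[μ] Y k)
    (hY : ∀ k, MemLp (Y k) (ENNReal.ofReal q) μ) (hYad : Adapted 𝓕 Y) :
    ∫⁻ ω, (∑' k, ENNReal.ofReal (Y k ω)) ^ q ∂μ ≤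
      2 * (ENNReal.ofReal q * 2 ^ (q - 1)) * ∫⁻ ω, ∑' k, ENNReal.ofReal (Y k ω) ^ q ∂μ +
        (2 * (ENNReal.ofReal q * 2 ^ (q - 1))) ^ q *
          ∫⁻ ω, (∑' k, ENNReal.ofReal (μ[Y k|𝓕 (k - 1)] ω)) ^ q ∂μ := by
  have hq1 : 1 ≤ ENNReal.ofReal q := one_le_ofReal.2 hq.le
  set D := ENNReal.ofReal q * 2 ^ (q - 1)
  set y : ℕ → Ω → ℝ≥0∞ := fun k ω => ENNReal.ofReal (Y k ω)
  have hy (j k : ℕ) (hjk : j < k) : Measurable[𝓕 (k - 1)] (y j) :=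
    ((hYad j).mono (𝓕.mono (Nat.le_sub_one_of_lt hjk)) le_rfl).ennreal_ofReal
  have hy' (k : ℕ) : Measurable (y k) := ((hYad k).mono (𝓕.le k) le_rfl).ennreal_ofReal
  have hT (k : ℕ) : Measurable[𝓕 (k - 1)] fun ω => ∑ j ∈ range k, y j ω :=
    Finset.measurable_sum _ fun j hj => hy j k (mem_range.1 hj)
  refine lintegral_rpow_tsum_le_of_forall_sum_range_le (by linarith)
    (fun k => (hy' k).aemeasurable) fun N => ?_
  set u := ∫⁻ ω, (∑ k ∈ range N, y k ω) ^ q ∂μ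
  have hu : u ≠ ∞ := (lintegral_rpow_sum_ofReal_lt_top hq.le hY (range N)).ne
  rw [mul_assoc 2 D]
  refine le_of_le_mul_rpow_add (by linarith) hu ?_
  calc u ≤ ∫⁻ ω, ENNReal.ofReal q *
        ∑ k ∈ range N, (∑ j ∈ range (k + 1), y j ω) ^ (q - 1) * y k ω ∂μ :=
        lintegral_mono fun ω => rpow_sum_range_le_mul_sum_rpow_mul hq.le (fun _ => ofReal_ne_top) N
    _ ≤ ∫⁻ ω, D * (∑ k ∈ range N, (∑ j ∈ range k, y j ω) ^ (q - 1) * y k ω +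
        ∑ k ∈ range N, y k ω ^ q) ∂μ :=
        lintegral_mono fun ω => by
          rw [mul_assoc]; gcongr; exact sum_range_rpow_sum_succ_mul_le hq.le _ N
    _ = D * (∫⁻ ω, ∑ k ∈ range N, (∑ j ∈ range k, y j ω) ^ (q - 1) *
          ENNReal.ofReal (μ[Y k|𝓕 (k - 1)] ω) ∂μ + ∫⁻ ω, ∑ k ∈ range N, y k ω ^ q ∂μ) := by
        rw [lintegral_const_mul' _ _ (mul_ne_top ofReal_ne_top (rpow_ne_top_of_nonneg
            (by linarith) ofNat_ne_top)),
          lintegral_add_right _ (Finset.measurable_sum _ fun k _ => (hy' k).pow_const q),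
          lintegral_sum_mul_ofReal_condExp (fun k => 𝓕.le _) (fun k => (hY k).integrable hq1) hY0
            (fun k => (hT k).pow_const _)]
    _ ≤ D * (u ^ (1 - q⁻¹) *
          (∫⁻ ω, (∑' k, ENNReal.ofReal (μ[Y k|𝓕 (k - 1)] ω)) ^ q ∂μ) ^ q⁻¹ +
        ∫⁻ ω, ∑' k, y k ω ^ q ∂μ) := by
        gcongr
        · exact lintegral_sum_rpow_mul_le hq
            (Finset.aemeasurable_fun_sum _ fun k _ => (hy' k).aemeasurable)
            (fun k => (stronglyMeasurable_condExp.mono (𝓕.le _)).measurable.ennreal_ofReal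
              |>.aemeasurable)
            fun k hk ω => sum_le_sum_of_subset (range_subset_range.2 (mem_range.1 hk).le)
        · exact ENNReal.sum_le_tsum _
    _ = _ := mul_add _ _ _

end CondExp

/-- For a one-parameter filtration `(ℱ_k)` and `q ≥ 1`, for any adapted
sequence `(Y_k)` of nonnegative random variables in `L^q`, one has, with two-sided
constants depending only on `q`:
`𝔼[(Σ_k Y_k)^q] ≃ 𝔼[Σ_k Y_k^q] + 𝔼[(Σ_k 𝔼_{k−1} Y_k)^q]` (with `𝔼_{−1} := 𝔼_0`). -/
theorem sum_nonneg_adapted_moment_equiv :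
    ∀ q : ℝ, 1 ≤ q →
      ∃ c C : ℝ≥0∞, 0 < c ∧ C ≠ ∞ ∧
        ∀ (Ω : Type*) [m0 : MeasurableSpace Ω] (μ : Measure Ω) [IsProbabilityMeasure μ]
          (𝓕 : ℕ → MeasurableSpace Ω), (∀ k, 𝓕 k ≤ m0) → Monotone 𝓕 →
          ∀ Y : ℕ → Ω → ℝ, (∀ k ω, 0 ≤ Y k ω) →
            (∀ k, MemLp (Y k) (ENNReal.ofReal q) μ) →
            (∀ k, Measurable[𝓕 k] (Y k)) →
            c * ((∫⁻ ω, ∑' k : ℕ, ENNReal.ofReal (Y k ω) ^ q ∂μ)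
                  + ∫⁻ ω, (∑' k : ℕ, ENNReal.ofReal ((μ[Y k|𝓕 (k - 1)]) ω)) ^ q ∂μ) ≤
                ∫⁻ ω, (∑' k : ℕ, ENNReal.ofReal (Y k ω)) ^ q ∂μ ∧
            ∫⁻ ω, (∑' k : ℕ, ENNReal.ofReal (Y k ω)) ^ q ∂μ ≤
              C * ((∫⁻ ω, ∑' k : ℕ, ENNReal.ofReal (Y k ω) ^ q ∂μ)
                  + ∫⁻ ω, (∑' k : ℕ, ENNReal.ofReal ((μ[Y k|𝓕 (k - 1)]) ω)) ^ q ∂μ) := by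
  intro q hq
  rcases hq.eq_or_lt with rfl | hq
  · refine ⟨2⁻¹, 1, by simp, one_ne_top, fun Ω _ μ _ 𝓕 h𝓕 _ Y hY0 hY _ => ?_⟩
    simp only [rpow_one, lintegral_tsum_ofReal_condExp (fun k => h𝓕 (k - 1))
      (fun k => memLp_one_iff_integrable.1 (by simpa using hY k)) fun k => ae_of_all _ (hY0 k)]
    constructor
    · rw [← two_mul, ← mul_assoc, ENNReal.inv_mul_cancel two_ne_zero ofNat_ne_top, one_mul]
    · rw [one_mul]; exact le_self_add
  set K := (2 * ENNReal.ofReal q) ^ q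
  set D := 2 * (ENNReal.ofReal q * 2 ^ (q - 1))
  refine ⟨(1 + K)⁻¹, D + D ^ q, ENNReal.inv_pos.2 (by finiteness), by finiteness,
    fun Ω _ μ _ 𝓕 h𝓕 hmono Y hY0 hY hYad => ?_⟩
  let 𝓖 : Filtration ℕ _ := ⟨𝓕, hmono, h𝓕⟩
  have hY0' k : 0 ≤ᵐ[μ] Y k := ae_of_all _ (hY0 k)
  set T := ∫⁻ ω, (∑' k, ENNReal.ofReal (Y k ω)) ^ q ∂μ
  set b := ∫⁻ ω, ∑' k, ENNReal.ofReal (Y k ω) ^ q ∂μ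
  set W := ∫⁻ ω, (∑' k, ENNReal.ofReal (μ[Y k|𝓕 (k - 1)] ω)) ^ q ∂μ
  have hbT : b ≤ T := lintegral_mono fun ω => tsum_rpow_le_rpow_tsum hq.le _
  have hWT : W ≤ K * T := lintegral_rpow_tsum_ofReal_condExp_le (𝓕 := 𝓖) hq hY0' hY
  have hTbW : T ≤ D * b + D ^ q * W := lintegral_rpow_tsum_ofReal_le (𝓕 := 𝓖) hq hY0' hY hYad
  constructor
  · calc (1 + K)⁻¹ * (b + W) ≤ (1 + K)⁻¹ * ((1 + K) * T) := by rw [one_add_mul]; gcongr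
      _ = T := by
        rw [← mul_assoc, ENNReal.inv_mul_cancel (by simp) (by finiteness), one_mul]
  · calc T ≤ D * b + D ^ q * W := hTbW
      _ ≤ (D + D ^ q) * b + (D + D ^ q) * W :=
        add_le_add (by gcongr; exact le_self_add) (by gcongr; exact le_add_self)
      _ = (D + D ^ q) * (b + W) := (mul_add _ _ _).symm
end

section
/- Let p, q ∈ (1, ∞) with Hölder conjugates p', q', let (𝒰_k)_{k∈J}, (𝒱_k)_{k∈J} be families of sub-σ-algebras with 𝒰_k ⊆ 𝒱_k for each k, and let (X_k), (Y_k) be sequences of random variables. Then Σ_k 𝔼[X_k Y_k] ≤ ( 𝔼[ (Σ_k 𝔼_{𝒰_k}|X_k|^p)^{q/p} ] )^{1/q} · ( 𝔼[ (Σ_k 𝔼_{𝒰_k}|Y_k|^{p'})^{q'/p'} ] )^{1/q'}, whenever the right-hand side is finite and each X_k Y_k is integrable. -/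
/-!
Write `A_k = 𝔼_{𝒰_k}|X_k|^p` and `B_k = 𝔼_{𝒰_k}|Y_k|^{p'}`. Conditioning Young's inequality
`|xy| ≤ r^p |x|^p / p + r^{-p'} |y|^{p'} / p'` for all rational `r > 0` at once and optimizing in
`r` pointwise gives the conditional Hölder inequality `𝔼_{𝒰_k}|X_k Y_k| ≤ A_k^{1/p} B_k^{1/p'}`.
Taking expectations, summing over `k`, and applying Hölder's inequality first in `ℓ^p` (for each
`ω`) and then in `L^q` bounds `∑_k 𝔼|X_k Y_k|` by the product of the two norms.
By monotone convergence, the truncated conditional expectation `econdExp` agrees a.e. with the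
Lebesgue conditional expectation `condLExp`, whose linearity and monotonicity are used throughout.
-/

open MeasureTheory ENNReal


/-- The conditional expectation of a nonnegative `ℝ≥0∞`-valued function `g` given `m`,
defined as the monotone limit of the conditional expectations of the truncations
`min g k`; this extends the usual conditional expectation to possibly non-integrable
nonnegative functions. -/
noncomputable def econdExp {Ω : Type*} [MeasurableSpace Ω] (μ : Measure Ω)
    (m : MeasurableSpace Ω) (g : Ω → ℝ≥0∞) : Ω → ℝ≥0∞ :=
  fun ω => ⨆ k : ℕ, ENNReal.ofReal ((μ[fun a => (min (g a) (k : ℝ≥0∞)).toReal|m]) ω)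

/-- The norm `‖X‖_{L^q(𝒱, ℓ^p | 𝒰)} = (𝔼[(Σ_k 𝔼_{𝒰_k}|X_k|^p)^{q/p}])^{1/q}`, with the
conditional expectations of the nonnegative functions `|X_k|^p` taken in the extended
(monotone-limit) sense. -/
noncomputable def condLqLpNorm {Ω J : Type*} [MeasurableSpace Ω] (μ : Measure Ω)
    (𝒰 : J → MeasurableSpace Ω) (p q : ℝ) (X : J → Ω → ℝ) : ℝ≥0∞ :=
  (∫⁻ ω, (∑' k : J, econdExp μ (𝒰 k) (fun a => (‖X k a‖₊ : ℝ≥0∞) ^ p) ω) ^ (q/p) ∂μ) ^ (1/q)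

open Filter Topology

theorem Real.exists_young_scaled_eq {p p' α β : ℝ} (hp : p.HolderConjugate p') (hα : 0 < α)
    (hβ : 0 < β) : ∃ r > 0, r ^ p / p * α + r ^ (-p') / p' * β = α ^ (1 / p) * β ^ (1 / p') := by
  have hdiv {x s s' : ℝ} (hs : s.HolderConjugate s') (hx : 0 < x) :
      x / x ^ (1 / s') = x ^ (1 / s) := by
    rw [show 1 / s = 1 - 1 / s' by rw [one_div, one_div, hs.symm.one_sub_inv],
      Real.rpow_sub hx, Real.rpow_one]
  refine ⟨(β / α) ^ (1 / (p * p')), by positivity, ?_⟩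
  have h1 : ((β / α) ^ (1 / (p * p'))) ^ p * α = α ^ (1 / p) * β ^ (1 / p') := by
    rw [← Real.rpow_mul (by positivity), show 1 / (p * p') * p = 1 / p' by field_simp [hp.ne_zero],
      Real.div_rpow hβ.le hα.le, div_mul_eq_mul_div, mul_div_assoc, hdiv hp hα, mul_comm]
  have h2 : ((β / α) ^ (1 / (p * p'))) ^ (-p') * β = α ^ (1 / p) * β ^ (1 / p') := by
    rw [← Real.rpow_mul (by positivity),
      show 1 / (p * p') * -p' = -(1 / p) by field_simp [hp.symm.ne_zero],
      Real.rpow_neg (by positivity), Real.div_rpow hβ.le hα.le, inv_div, div_mul_eq_mul_div,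
      mul_div_assoc, hdiv hp.symm hβ]
  rw [div_mul_eq_mul_div, div_mul_eq_mul_div, h1, h2]
  linear_combination (α ^ (1 / p) * β ^ (1 / p')) * hp.inv_add_inv_eq_one

theorem le_of_forall_rat_pos_le_of_continuousAt {α : Type*} [TopologicalSpace α] [Preorder α]
    [ClosedIciTopology α] {φ : ℝ → α} {e : α} {r : ℝ} (hr : 0 < r) (hφ : ContinuousAt φ r)
    (h : ∀ q : ℚ, 0 < q → e ≤ φ q) : e ≤ φ r := by
  have hq : Tendsto ((↑) : ℚ → ℝ) (comap (↑) (𝓝 r)) (𝓝 r) := tendsto_comap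
  have : (comap ((↑) : ℚ → ℝ) (𝓝 r)).NeBot :=
    Rat.isDenseEmbedding_coe_real.toIsDenseInducing.comap_nhds_neBot r
  exact ge_of_tendsto (hφ.tendsto.comp hq)
    ((hq.eventually (lt_mem_nhds hr)).mono fun q hq => h q (by exact_mod_cast hq))

namespace ENNReal

theorem young_inequality_scaled {p p' r : ℝ} (hp : p.HolderConjugate p') (hr : 0 < r)
    (a b : ℝ≥0∞) :
    a * b ≤ ENNReal.ofReal (r ^ p / p) * a ^ p + ENNReal.ofReal (r ^ (-p') / p') * b ^ p' := by
  have hscale : a * b = (ENNReal.ofReal r * a) * ((ENNReal.ofReal r)⁻¹ * b) := by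
    rw [mul_mul_mul_comm, ENNReal.mul_inv_cancel (ENNReal.ofReal_pos.mpr hr).ne'
      ENNReal.ofReal_ne_top, one_mul]
  rw [hscale]
  refine (ENNReal.young_inequality _ _ hp).trans_eq ?_
  congr 1
  · rw [ENNReal.mul_rpow_of_nonneg _ _ hp.nonneg, ENNReal.ofReal_rpow_of_pos hr,
      div_eq_mul_inv, div_eq_mul_inv, ENNReal.ofReal_mul (by positivity),
      ENNReal.ofReal_inv_of_pos hp.pos]
    ring
  · rw [ENNReal.mul_rpow_of_nonneg _ _ hp.symm.nonneg, ← ENNReal.ofReal_inv_of_pos hr,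
      ENNReal.ofReal_rpow_of_pos (by positivity), Real.inv_rpow hr.le,
      ← Real.rpow_neg hr.le, div_eq_mul_inv, div_eq_mul_inv,
      ENNReal.ofReal_mul (by positivity), ENNReal.ofReal_inv_of_pos hp.symm.pos]
    ring

theorem le_rpow_mul_rpow_of_forall_rat_young {p p' : ℝ} (hp : p.HolderConjugate p')
    {a b e : ℝ≥0∞} (ha : a ≠ ∞) (hb : b ≠ ∞)
    (h : ∀ r : ℚ, 0 < r →
      e ≤ ENNReal.ofReal ((r : ℝ) ^ p / p) * a + ENNReal.ofReal ((r : ℝ) ^ (-p') / p') * b) :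
    e ≤ a ^ (1 / p) * b ^ (1 / p') := by
  have hp0 := hp.pos
  have hp'0 := hp.symm.pos
  set α := a.toReal
  set β := b.toReal
  have hreal (r : ℝ) (hr : 0 < r) : e ≤ ENNReal.ofReal (r ^ p / p * α + r ^ (-p') / p' * β) := by
    refine le_of_forall_rat_pos_le_of_continuousAt
      (φ := fun r => ENNReal.ofReal (r ^ p / p * α + r ^ (-p') / p' * β)) hr
      (ENNReal.continuous_ofReal.continuousAt.comp
        (by fun_prop (disch := first | positivity | exact Or.inl hr.ne')))
      fun q hq => ?_
    rw [ENNReal.ofReal_add (by positivity) (by positivity), ENNReal.ofReal_mul (by positivity),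
      ENNReal.ofReal_mul (by positivity), ofReal_toReal ha, ofReal_toReal hb]
    exact h q hq
  -- The optimal `r` degenerates when `α` or `β` vanishes, so we optimize for `α + δ`, `β + δ`.
  have hδ (δ : ℝ) (hδ : 0 < δ) :
      e ≤ ENNReal.ofReal ((α + δ) ^ (1 / p) * (β + δ) ^ (1 / p')) := by
    obtain ⟨r, hr, hr_eq⟩ := Real.exists_young_scaled_eq hp (α := α + δ) (β := β + δ)
      (by positivity) (by positivity)
    refine (hreal r hr).trans (ENNReal.ofReal_le_ofReal ?_)
    rw [← hr_eq]
    gcongr <;> linarith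
  have hlim : Tendsto (fun δ : ℝ => ENNReal.ofReal ((α + δ) ^ (1 / p) * (β + δ) ^ (1 / p')))
      (𝓝[>] 0) (𝓝 (ENNReal.ofReal ((α + 0) ^ (1 / p) * (β + 0) ^ (1 / p')))) :=
    (ENNReal.continuous_ofReal.comp (by fun_prop (disch := positivity))).tendsto _ |>.mono_left
      nhdsWithin_le_nhds
  refine (ge_of_tendsto hlim (eventually_nhdsWithin_of_forall hδ)).trans_eq ?_
  rw [add_zero, add_zero, ENNReal.ofReal_mul (by positivity),
    ← ENNReal.ofReal_rpow_of_nonneg toReal_nonneg (by positivity),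
    ← ENNReal.ofReal_rpow_of_nonneg toReal_nonneg (by positivity), ofReal_toReal ha,
    ofReal_toReal hb]

end ENNReal

namespace MeasureTheory

variable {Ω J : Type*}

section CondExp

variable {m m0 : MeasurableSpace Ω} {μ : Measure[m0] Ω}

theorem condLExp_iSup_ae_eq (hm : m ≤ m0) [SigmaFinite (μ.trim hm)] {f : ℕ → Ω → ℝ≥0∞}
    (hf : ∀ n, Measurable (f n)) (hmono : Monotone f) :
    μ⁻[⨆ n, f n|m] =ᵐ[μ] fun ω => ⨆ n, μ⁻[f n|m] ω := by
  refine (ae_eq_condLExp hm μ _ (Measurable.iSup fun n => measurable_condLExp m μ (f n))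
    fun s hs => ?_).symm
  have hmono' : ∀ᵐ ω ∂μ.restrict s, Monotone fun n => μ⁻[f n|m] ω := by
    refine ae_restrict_of_ae ?_
    filter_upwards [ae_all_iff.2 fun n => condLExp_mono (P := μ) (mΩ := m)
      (Eventually.of_forall (hmono (Nat.le_succ n)))] with ω hω
    exact monotone_nat_of_le_succ hω
  rw [lintegral_iSup' (fun n => (measurable_condLExp' m μ (f n)).aemeasurable) hmono']
  simp only [setLIntegral_condLExp hm μ _ hs, iSup_apply]
  exact (lintegral_iSup hf hmono).symm

theorem condLExp_mul_le_young {p p' r : ℝ} (hp : p.HolderConjugate p') (hr : 0 < r)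
    {F G : Ω → ℝ≥0∞} (hF : AEMeasurable F μ) :
    μ⁻[fun a => F a * G a|m] ≤ᵐ[μ] fun ω =>
      ENNReal.ofReal (r ^ p / p) * μ⁻[fun a => F a ^ p|m] ω +
        ENNReal.ofReal (r ^ (-p') / p') * μ⁻[fun a => G a ^ p'|m] ω := by
  set c := ENNReal.ofReal (r ^ p / p)
  set c' := ENNReal.ofReal (r ^ (-p') / p')
  calc μ⁻[fun a => F a * G a|m]
      ≤ᵐ[μ] μ⁻[c • (fun a => F a ^ p) + c' • (fun a => G a ^ p')|m] :=
        condLExp_mono (Eventually.of_forall fun a => ENNReal.young_inequality_scaled hp hr _ _)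
    _ =ᵐ[μ] μ⁻[c • (fun a => F a ^ p)|m] + μ⁻[c' • (fun a => G a ^ p')|m] :=
        condLExp_add_left _ (by fun_prop)
    _ =ᵐ[μ] c • μ⁻[fun a => F a ^ p|m] + c' • μ⁻[fun a => G a ^ p'|m] :=
        (condLExp_smul' _ ofReal_ne_top).add (condLExp_smul' _ ofReal_ne_top)

theorem condLExp_mul_le_rpow_mul_rpow {p p' : ℝ} (hp : p.HolderConjugate p')
    {F G : Ω → ℝ≥0∞} (hF : AEMeasurable F μ)
    (hFp : ∀ᵐ ω ∂μ, μ⁻[fun a => F a ^ p|m] ω ≠ ∞)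
    (hGp : ∀ᵐ ω ∂μ, μ⁻[fun a => G a ^ p'|m] ω ≠ ∞) :
    μ⁻[fun a => F a * G a|m] ≤ᵐ[μ] fun ω =>
      μ⁻[fun a => F a ^ p|m] ω ^ (1 / p) * μ⁻[fun a => G a ^ p'|m] ω ^ (1 / p') := by
  have hyoung := ae_all_iff.2 fun r : {r : ℚ // 0 < r} =>
    condLExp_mul_le_young (m := m) (G := G) hp (Rat.cast_pos.2 r.2) hF
  filter_upwards [hyoung, hFp, hGp] with ω hω hFω hGω
  exact ENNReal.le_rpow_mul_rpow_of_forall_rat_young hp hFω hGω fun r hr => hω ⟨r, hr⟩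

theorem measurable_econdExp (hm : m ≤ m0) (g : Ω → ℝ≥0∞) : Measurable (econdExp μ m g) :=
  Measurable.iSup fun _ => (stronglyMeasurable_condExp.mono hm).measurable.ennreal_ofReal

theorem econdExp_ae_eq_condLExp [IsFiniteMeasure μ] (hm : m ≤ m0) {g : Ω → ℝ≥0∞}
    (hg : Measurable g) : econdExp μ m g =ᵐ[μ] μ⁻[g|m] := by
  have htrunc (k : ℕ) : (fun ω => ENNReal.ofReal ((μ[fun a => (min (g a) k).toReal|m]) ω))
      =ᵐ[μ] μ⁻[fun a => min (g a) k|m] := by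
    have hint : Integrable (fun a => (min (g a) k).toReal) μ :=
      (integrable_const (k : ℝ)).mono' (hg.min measurable_const).ennreal_toReal.aestronglyMeasurable
        (Eventually.of_forall fun a => by
          rw [Real.norm_of_nonneg toReal_nonneg, ← toReal_natCast]
          exact toReal_mono (by simp) (min_le_right _ _))
    refine (condLExp_ofReal m hint (Eventually.of_forall fun a => toReal_nonneg)).symm.trans ?_
    simp only [ofReal_toReal (min_lt_of_right_lt (natCast_lt_top k)).ne]
    rfl
  have hmin : (⨆ k : ℕ, fun a => min (g a) (k : ℝ≥0∞)) = g := by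
    ext a
    simp [← inf_iSup_eq, iSup_natCast]
  calc econdExp μ m g =ᵐ[μ] fun ω => ⨆ k : ℕ, μ⁻[fun a => min (g a) k|m] ω := by
        filter_upwards [ae_all_iff.2 htrunc] with ω hω
        exact iSup_congr hω
    _ =ᵐ[μ] μ⁻[⨆ k : ℕ, fun a => min (g a) k|m] :=
        (condLExp_iSup_ae_eq hm (fun k => hg.min measurable_const)
          fun i j hij a => min_le_min_left _ (Nat.cast_le.2 hij)).symm
    _ = μ⁻[g|m] := by rw [hmin]

theorem lintegral_mul_le_lintegral_econdExp_rpow_mul_rpow [IsFiniteMeasure μ] (hm : m ≤ m0)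
    {p p' : ℝ} (hp : p.HolderConjugate p') {F G : Ω → ℝ≥0∞} (hF : Measurable F)
    (hG : Measurable G) (hFp : ∀ᵐ ω ∂μ, econdExp μ m (fun a => F a ^ p) ω ≠ ∞)
    (hGp : ∀ᵐ ω ∂μ, econdExp μ m (fun a => G a ^ p') ω ≠ ∞) :
    ∫⁻ ω, F ω * G ω ∂μ ≤ ∫⁻ ω, econdExp μ m (fun a => F a ^ p) ω ^ (1 / p) *
      econdExp μ m (fun a => G a ^ p') ω ^ (1 / p') ∂μ := by
  have eF := econdExp_ae_eq_condLExp (μ := μ) hm (hF.pow_const p)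
  have eG := econdExp_ae_eq_condLExp (μ := μ) hm (hG.pow_const p')
  calc ∫⁻ ω, F ω * G ω ∂μ = ∫⁻ ω, μ⁻[fun a => F a * G a|m] ω ∂μ :=
        (lintegral_condLExp hm μ _).symm
    _ ≤ ∫⁻ ω, μ⁻[fun a => F a ^ p|m] ω ^ (1 / p) * μ⁻[fun a => G a ^ p'|m] ω ^ (1 / p') ∂μ :=
        lintegral_mono_ae <| condLExp_mul_le_rpow_mul_rpow hp hF.aemeasurable
          (by filter_upwards [hFp, eF] with ω h e using e ▸ h)
          (by filter_upwards [hGp, eG] with ω h e using e ▸ h)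
    _ = _ := lintegral_congr_ae (by filter_upwards [eF, eG] with ω e e' using by rw [e, e'])

end CondExp

section

variable [MeasurableSpace Ω] {μ : Measure Ω}

theorem lintegral_sum_mul_le_LqLp_mul_LqLp {p p' q q' : ℝ} (hp : p.HolderConjugate p')
    (hq : q.HolderConjugate q') (s : Finset J) {f g : J → Ω → ℝ≥0∞}
    (hf : ∀ k, AEMeasurable (f k) μ) (hg : ∀ k, AEMeasurable (g k) μ) :
    ∫⁻ ω, ∑ k ∈ s, f k ω * g k ω ∂μ ≤
      (∫⁻ ω, (∑ k ∈ s, f k ω ^ p) ^ (q / p) ∂μ) ^ (1 / q) *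
        (∫⁻ ω, (∑ k ∈ s, g k ω ^ p') ^ (q' / p') ∂μ) ^ (1 / q') := by
  calc ∫⁻ ω, ∑ k ∈ s, f k ω * g k ω ∂μ
      ≤ ∫⁻ ω, (∑ k ∈ s, f k ω ^ p) ^ (1 / p) * (∑ k ∈ s, g k ω ^ p') ^ (1 / p') ∂μ :=
        lintegral_mono fun ω => ENNReal.inner_le_Lp_mul_Lq s _ _ hp
    _ ≤ (∫⁻ ω, ((∑ k ∈ s, f k ω ^ p) ^ (1 / p)) ^ q ∂μ) ^ (1 / q) *
          (∫⁻ ω, ((∑ k ∈ s, g k ω ^ p') ^ (1 / p')) ^ q' ∂μ) ^ (1 / q') :=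
        ENNReal.lintegral_mul_le_Lp_mul_Lq μ hq (by fun_prop) (by fun_prop)
    _ = _ := by simp only [← ENNReal.rpow_mul, one_div_mul_eq_div]

theorem ae_ne_top_of_lintegral_tsum_rpow_ne_top {f : J → Ω → ℝ≥0∞} {s : ℝ} (hs : 0 < s)
    (h : ∫⁻ ω, (∑' k, f k ω) ^ s ∂μ ≠ ∞) (k : J) (hf : AEMeasurable (f k) μ) :
    ∀ᵐ ω ∂μ, f k ω ≠ ∞ := by
  have hk : ∫⁻ ω, f k ω ^ s ∂μ ≠ ∞ := ne_top_of_le_ne_top h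
    (lintegral_mono fun ω => ENNReal.rpow_le_rpow (ENNReal.le_tsum k) hs.le)
  filter_upwards [ae_lt_top' (hf.pow_const s) hk] with ω hω
  exact ((ENNReal.rpow_lt_top_iff_of_pos hs).1 hω).ne

theorem tsum_integral_le_of_tsum_lintegral_enorm_le {f : J → Ω → ℝ} {C : ℝ≥0∞} (hC : C ≠ ∞)
    (h : ∑' k, ∫⁻ ω, ‖f k ω‖ₑ ∂μ ≤ C) : ∑' k, ∫ ω, f k ω ∂μ ≤ C.toReal := by
  have hfin : ∑' k, ∫⁻ ω, ‖f k ω‖ₑ ∂μ ≠ ∞ := ne_top_of_le_ne_top hC h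
  have hbound (k : J) : ‖∫ ω, f k ω ∂μ‖ ≤ (∫⁻ ω, ‖f k ω‖ₑ ∂μ).toReal := by
    rw [← toReal_enorm]
    exact toReal_mono (ne_top_of_le_ne_top hfin (ENNReal.le_tsum k))
      (enorm_integral_le_lintegral_enorm _)
  have hsum := ENNReal.summable_toReal hfin
  calc ∑' k, ∫ ω, f k ω ∂μ ≤ ∑' k, (∫⁻ ω, ‖f k ω‖ₑ ∂μ).toReal :=
        Summable.tsum_le_tsum (fun k => (Real.le_norm_self _).trans (hbound k))
          (hsum.of_norm_bounded hbound) hsum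
    _ = (∑' k, ∫⁻ ω, ‖f k ω‖ₑ ∂μ).toReal :=
        (ENNReal.tsum_toReal_eq fun k => ne_top_of_le_ne_top hfin (ENNReal.le_tsum k)).symm
    _ ≤ C.toReal := toReal_mono hC h

end

section CondLqLpNorm

variable [m0 : MeasurableSpace Ω] {μ : Measure Ω} {𝒰 : J → MeasurableSpace Ω}

theorem ae_econdExp_ne_top_of_condLqLpNorm_ne_top (hm : ∀ k, 𝒰 k ≤ m0) {p q : ℝ} (hp : 0 < p)
    (hq : 0 < q) {X : J → Ω → ℝ} (h : condLqLpNorm μ 𝒰 p q X ≠ ∞) (k : J) :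
    ∀ᵐ ω ∂μ, econdExp μ (𝒰 k) (fun a => ‖X k a‖ₑ ^ p) ω ≠ ∞ :=
  ae_ne_top_of_lintegral_tsum_rpow_ne_top (div_pos hq hp)
    ((rpow_lt_top_iff_of_pos (one_div_pos.2 hq)).1 h.lt_top).ne k
    (measurable_econdExp (hm k) _).aemeasurable

theorem tsum_lintegral_mul_le_condLqLpNorm_mul [IsFiniteMeasure μ] (hm : ∀ k, 𝒰 k ≤ m0)
    {p p' q q' : ℝ} (hp : p.HolderConjugate p') (hq : q.HolderConjugate q') {X Y : J → Ω → ℝ}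
    (hXm : ∀ k, Measurable (X k)) (hYm : ∀ k, Measurable (Y k))
    (hXfin : condLqLpNorm μ 𝒰 p q X ≠ ∞) (hYfin : condLqLpNorm μ 𝒰 p' q' Y ≠ ∞) :
    ∑' k, ∫⁻ ω, ‖X k ω‖ₑ * ‖Y k ω‖ₑ ∂μ ≤
      condLqLpNorm μ 𝒰 p q X * condLqLpNorm μ 𝒰 p' q' Y := by
  set f := fun k => econdExp μ (𝒰 k) (fun a => ‖X k a‖ₑ ^ p)
  set g := fun k => econdExp μ (𝒰 k) (fun a => ‖Y k a‖ₑ ^ p')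
  have hf (k : J) : AEMeasurable (fun ω => f k ω ^ (1 / p)) μ :=
    (measurable_econdExp (hm k) _).pow_const _ |>.aemeasurable
  have hg (k : J) : AEMeasurable (fun ω => g k ω ^ (1 / p')) μ :=
    (measurable_econdExp (hm k) _).pow_const _ |>.aemeasurable
  have hcancel {r : ℝ} (hr : r ≠ 0) (x : ℝ≥0∞) : (x ^ (1 / r)) ^ r = x := by
    rw [one_div, ENNReal.rpow_inv_rpow hr]
  rw [ENNReal.tsum_eq_iSup_sum]
  refine iSup_le fun s => ?_
  calc ∑ k ∈ s, ∫⁻ ω, ‖X k ω‖ₑ * ‖Y k ω‖ₑ ∂μ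
      ≤ ∑ k ∈ s, ∫⁻ ω, f k ω ^ (1 / p) * g k ω ^ (1 / p') ∂μ :=
        Finset.sum_le_sum fun k _ => lintegral_mul_le_lintegral_econdExp_rpow_mul_rpow (hm k) hp
          (hXm k).enorm (hYm k).enorm
          (ae_econdExp_ne_top_of_condLqLpNorm_ne_top hm hp.pos hq.pos hXfin k)
          (ae_econdExp_ne_top_of_condLqLpNorm_ne_top hm hp.symm.pos hq.symm.pos hYfin k)
    _ = ∫⁻ ω, ∑ k ∈ s, f k ω ^ (1 / p) * g k ω ^ (1 / p') ∂μ :=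
        (lintegral_finsetSum' s fun k _ => (hf k).mul (hg k)).symm
    _ ≤ (∫⁻ ω, (∑ k ∈ s, f k ω) ^ (q / p) ∂μ) ^ (1 / q) *
          (∫⁻ ω, (∑ k ∈ s, g k ω) ^ (q' / p') ∂μ) ^ (1 / q') := by
        simpa only [hcancel hp.ne_zero, hcancel hp.symm.ne_zero] using
          lintegral_sum_mul_le_LqLp_mul_LqLp hp hq s hf hg
    _ ≤ condLqLpNorm μ 𝒰 p q X * condLqLpNorm μ 𝒰 p' q' Y := by
        have := hp.pos; have := hp.symm.pos; have := hq.pos; have := hq.symm.pos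
        unfold condLqLpNorm
        gcongr <;> exact ENNReal.sum_le_tsum s

end CondLqLpNorm

end MeasureTheory

theorem pairing_le_condLqLp_mul_dual_general {Ω J : Type*} [m0 : MeasurableSpace Ω]
    (μ : Measure Ω) [IsProbabilityMeasure μ]
    (𝒰 𝒱 : J → MeasurableSpace Ω) (h𝒰𝒱 : ∀ k, 𝒰 k ≤ 𝒱 k) (h𝒱 : ∀ k, 𝒱 k ≤ m0)
    (p q p' q' : ℝ) (hp : p.HolderConjugate p') (hq : q.HolderConjugate q')
    (X Y : J → Ω → ℝ) (hXm : ∀ k, Measurable (X k)) (hYm : ∀ k, Measurable (Y k))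
    (hXfin : condLqLpNorm μ 𝒰 p q X ≠ ∞) (hYfin : condLqLpNorm μ 𝒰 p' q' Y ≠ ∞) :
    ∑' k : J, ∫ ω, X k ω * Y k ω ∂μ ≤
      (condLqLpNorm μ 𝒰 p q X * condLqLpNorm μ 𝒰 p' q' Y).toReal := by
  refine tsum_integral_le_of_tsum_lintegral_enorm_le (mul_ne_top hXfin hYfin) ?_
  simpa only [enorm_mul] using tsum_lintegral_mul_le_condLqLpNorm_mul
    (fun k => (h𝒰𝒱 k).trans (h𝒱 k)) hp hq hXm hYm hXfin hYfin

/-- Hölder inequality for the norms `L^q(𝒱, ℓ^p | 𝒰)`: if `𝒰_k ⊆ 𝒱_k`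
and `p, q ∈ (1,∞)` with conjugates `p', q'`, then
`Σ_k 𝔼[X_k Y_k] ≤ ‖X‖_{L^q(𝒱,ℓ^p|𝒰)} · ‖Y‖_{L^{q'}(𝒱,ℓ^{p'}|𝒰)}`
whenever the right-hand side is finite and each `X_k Y_k` is integrable. -/
theorem pairing_le_condLqLp_mul_dual {Ω J : Type*} [m0 : MeasurableSpace Ω]
    (μ : Measure Ω) [IsProbabilityMeasure μ]
    (𝒰 𝒱 : J → MeasurableSpace Ω) (h𝒰𝒱 : ∀ k, 𝒰 k ≤ 𝒱 k) (h𝒱 : ∀ k, 𝒱 k ≤ m0)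
    (p q p' q' : ℝ) (hp : p.HolderConjugate p') (hq : q.HolderConjugate q')
    (X Y : J → Ω → ℝ) (hXm : ∀ k, Measurable (X k)) (hYm : ∀ k, Measurable (Y k))
    (hint : ∀ k, Integrable (fun ω => X k ω * Y k ω) μ)
    (hXfin : condLqLpNorm μ 𝒰 p q X ≠ ∞) (hYfin : condLqLpNorm μ 𝒰 p' q' Y ≠ ∞) :
    ∑' k : J, ∫ ω, X k ω * Y k ω ∂μ ≤
      (condLqLpNorm μ 𝒰 p q X * condLqLpNorm μ 𝒰 p' q' Y).toReal :=
  pairing_le_condLqLp_mul_dual_general (m0 := m0) μ 𝒰 𝒱 h𝒰𝒱 h𝒱 p q p' q' hp hq X Y hXm hYm hXfin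
    hYfin
end

section
/- Let (ℱ_{i,j})_{i,j≥0} be a two-parameter filtration (ℱ_{i,j} ⊆ ℱ_{i+1,j} ∩ ℱ_{i,j+1}). Then the (F4) condition, namely 𝔼_{i,j}𝔼_{k,l} = 𝔼_{min(i,k),min(j,l)} = 𝔼_{k,l}𝔼_{i,j} for all i,j,k,l, holds if and only if for all i, j the σ-algebras ℱ_{i,∞} and ℱ_{∞,j} are conditionally independent given ℱ_{i,j}, i.e. 𝔼_{i,∞}𝔼_{∞,j} = 𝔼_{i,j} = 𝔼_{∞,j}𝔼_{i,∞}. -/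
/-!
If `𝔼_{i,j} = 𝔼_{i,∞} 𝔼_{∞,j} = 𝔼_{∞,j} 𝔼_{i,∞}` for all `i, j`, then `𝔼_{k,∞}` and `𝔼_{∞,j}`
commute, so `𝔼_{i,j} 𝔼_{k,l} = 𝔼_{i,∞} 𝔼_{k,∞} 𝔼_{∞,j} 𝔼_{∞,l}`, and each of the two pairs is a
product of conditional expectations along a one-parameter filtration:
`𝔼_{i,∞} 𝔼_{k,∞} = 𝔼_{min(i,k),∞}` and `𝔼_{∞,j} 𝔼_{∞,l} = 𝔼_{∞,min(j,l)}`.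
Conversely, (F4) gives `𝔼_{i,l} 𝔼_{k,j} = 𝔼_{i,j}` for `k ≥ i` and `l ≥ j`. Letting `k → ∞`
(Lévy's upward theorem in `L¹`, and `L¹`-continuity of `𝔼_{i,l}`) gives `𝔼_{i,l} 𝔼_{∞,j} = 𝔼_{i,j}`,
and letting `l → ∞` then gives `𝔼_{i,∞} 𝔼_{∞,j} = 𝔼_{i,j}`.
-/

open MeasureTheory ENNReal

open Filter Topology

lemma ae_eq_of_tendsto_eLpNorm_of_eventually_ae_eq {α ι E : Type*} {mα : MeasurableSpace α}
    {μ : Measure α} [NormedAddCommGroup E] {l : Filter ι} [l.NeBot] {p : ℝ≥0∞} (hp : p ≠ 0)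
    {u : ι → α → E} {v g : α → E} (hu_meas : ∀ n, AEStronglyMeasurable (u n) μ)
    (hv : AEStronglyMeasurable v μ) (hlim : Tendsto (fun n => eLpNorm (u n - v) p μ) l (𝓝 0))
    (hu : ∀ᶠ n in l, u n =ᵐ[μ] g) : v =ᵐ[μ] g := by
  obtain ⟨n, hn⟩ := hu.exists
  have hg : AEStronglyMeasurable g μ := (hu_meas n).congr hn
  have hzero : eLpNorm (g - v) p μ = 0 :=
    tendsto_nhds_unique (tendsto_const_nhds.congr' <|
      hu.mono fun n hn => eLpNorm_congr_ae (hn.symm.sub EventuallyEq.rfl)) hlim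
  filter_upwards [(eLpNorm_eq_zero_iff (hg.sub hv) hp).mp hzero] with x hx
  exact (sub_eq_zero.mp hx).symm

section OneParameter

variable {Ω : Type*} [m0 : MeasurableSpace Ω] {μ : Measure Ω} [IsFiniteMeasure μ]
  {ℱ : ℕ → MeasurableSpace Ω}

lemma condExp_iSup_ae_eq_of_eventually_s17 (hmono : Monotone ℱ) (hle : ∀ n, ℱ n ≤ m0)
    {f g : Ω → ℝ} (h : ∀ᶠ n in atTop, μ[f|ℱ n] =ᵐ[μ] g) :
    μ[f|⨆ n, ℱ n] =ᵐ[μ] g :=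
  ae_eq_of_tendsto_eLpNorm_of_eventually_ae_eq one_ne_zero
    (fun _ => integrable_condExp.aestronglyMeasurable) integrable_condExp.aestronglyMeasurable
    (tendsto_eLpNorm_condExp (ℱ := ⟨ℱ, hmono, hle⟩) f) h

lemma condExp_condExp_iSup_ae_eq_of_eventually (hmono : Monotone ℱ) (hle : ∀ n, ℱ n ≤ m0)
    {m : MeasurableSpace Ω} {f g : Ω → ℝ} (h : ∀ᶠ n in atTop, μ[μ[f|ℱ n]|m] =ᵐ[μ] g) :
    μ[μ[f|⨆ n, ℱ n]|m] =ᵐ[μ] g := by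
  refine ae_eq_of_tendsto_eLpNorm_of_eventually_ae_eq one_ne_zero
    (fun _ => integrable_condExp.aestronglyMeasurable) integrable_condExp.aestronglyMeasurable ?_ h
  refine tendsto_of_tendsto_of_tendsto_of_le_of_le tendsto_const_nhds
    (tendsto_eLpNorm_condExp (μ := μ) (ℱ := ⟨ℱ, hmono, hle⟩) f) (fun _ => zero_le) fun n => ?_
  calc eLpNorm (μ[μ[f|ℱ n]|m] - μ[μ[f|⨆ n, ℱ n]|m]) 1 μ
      = eLpNorm (μ[μ[f|ℱ n] - μ[f|⨆ n, ℱ n]|m]) 1 μ :=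
        eLpNorm_congr_ae (condExp_sub integrable_condExp integrable_condExp m).symm
    _ ≤ eLpNorm (μ[f|ℱ n] - μ[f|⨆ n, ℱ n]) 1 μ := eLpNorm_condExp_le_eLpNorm _ le_rfl

lemma condExp_condExp_ae_eq_min {ι : Type*} [LinearOrder ι] {m : ι → MeasurableSpace Ω}
    (hmono : Monotone m) (hle : ∀ n, m n ≤ m0) (a b : ι) (f : Ω → ℝ) :
    μ[μ[f|m b]|m a] =ᵐ[μ] μ[f|m (min a b)] := by
  rcases le_total a b with hab | hba
  · rw [min_eq_left hab]
    exact condExp_condExp_of_le (hmono hab) (hle b)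
  · rw [min_eq_right hba]
    exact (condExp_of_stronglyMeasurable (hle a) (stronglyMeasurable_condExp.mono (hmono hba))
      integrable_condExp).eventuallyEq

end OneParameter

section TwoParameter

variable {Ω : Type*} {𝓕 : ℕ → ℕ → MeasurableSpace Ω}

lemma monotone_rowSup (hmono₁ : ∀ i j, 𝓕 i j ≤ 𝓕 (i + 1) j) : Monotone (rowSup 𝓕) :=
  monotone_nat_of_le_succ fun i => iSup_mono (hmono₁ i)

lemma monotone_colSup (hmono₂ : ∀ i j, 𝓕 i j ≤ 𝓕 i (j + 1)) : Monotone (colSup 𝓕) :=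
  monotone_nat_of_le_succ fun j => iSup_mono fun i => hmono₂ i j

variable [m0 : MeasurableSpace Ω] {μ : Measure Ω} [IsFiniteMeasure μ]

lemma rowSup_le (hle : ∀ i j, 𝓕 i j ≤ m0) (i : ℕ) : rowSup 𝓕 i ≤ m0 :=
  iSup_le (hle i)

lemma colSup_le (hle : ∀ i j, 𝓕 i j ≤ m0) (j : ℕ) : colSup 𝓕 j ≤ m0 :=
  iSup_le fun i => hle i j

lemma condExp_condExp_ae_eq_min_of_condIndep (hle : ∀ i j, 𝓕 i j ≤ m0)
    (hmono₁ : ∀ i j, 𝓕 i j ≤ 𝓕 (i + 1) j) (hmono₂ : ∀ i j, 𝓕 i j ≤ 𝓕 i (j + 1))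
    (hCI : ∀ i j : ℕ, ∀ f : Ω → ℝ, Integrable f μ →
        μ[μ[f|colSup 𝓕 j]|rowSup 𝓕 i] =ᵐ[μ] μ[f|𝓕 i j] ∧
        μ[μ[f|rowSup 𝓕 i]|colSup 𝓕 j] =ᵐ[μ] μ[f|𝓕 i j])
    (i j k l : ℕ) {f : Ω → ℝ} (hf : Integrable f μ) :
    μ[μ[f|𝓕 k l]|𝓕 i j] =ᵐ[μ] μ[f|𝓕 (min i k) (min j l)] := by
  set g := μ[f|colSup 𝓕 l]
  have hcomm : μ[μ[g|rowSup 𝓕 k]|colSup 𝓕 j] =ᵐ[μ] μ[μ[g|colSup 𝓕 j]|rowSup 𝓕 k] :=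
    (hCI k j g integrable_condExp).2.trans (hCI k j g integrable_condExp).1.symm
  calc μ[μ[f|𝓕 k l]|𝓕 i j]
      =ᵐ[μ] μ[μ[g|rowSup 𝓕 k]|𝓕 i j] := condExp_congr_ae (hCI k l f hf).1.symm
    _ =ᵐ[μ] μ[μ[μ[g|rowSup 𝓕 k]|colSup 𝓕 j]|rowSup 𝓕 i] :=
        (hCI i j _ integrable_condExp).1.symm
    _ =ᵐ[μ] μ[μ[μ[g|colSup 𝓕 j]|rowSup 𝓕 k]|rowSup 𝓕 i] := condExp_congr_ae hcomm
    _ =ᵐ[μ] μ[μ[μ[f|colSup 𝓕 (min j l)]|rowSup 𝓕 k]|rowSup 𝓕 i] :=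
        condExp_congr_ae <| condExp_congr_ae <|
          condExp_condExp_ae_eq_min (monotone_colSup hmono₂) (colSup_le hle) j l f
    _ =ᵐ[μ] μ[μ[f|colSup 𝓕 (min j l)]|rowSup 𝓕 (min i k)] :=
        condExp_condExp_ae_eq_min (monotone_rowSup hmono₁) (rowSup_le hle) i k _
    _ =ᵐ[μ] μ[f|𝓕 (min i k) (min j l)] := (hCI _ _ f hf).1

lemma condExp_rowSup_condExp_colSup_ae_eq_of_f4 (hle : ∀ i j, 𝓕 i j ≤ m0)
    (hmono₁ : ∀ i j, 𝓕 i j ≤ 𝓕 (i + 1) j) (hmono₂ : ∀ i j, 𝓕 i j ≤ 𝓕 i (j + 1))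
    (hF4 : ∀ i j k l : ℕ, ∀ f : Ω → ℝ, Integrable f μ →
        μ[μ[f|𝓕 k l]|𝓕 i j] =ᵐ[μ] μ[f|𝓕 (min i k) (min j l)])
    (i j : ℕ) {f : Ω → ℝ} (hf : Integrable f μ) :
    μ[μ[f|colSup 𝓕 j]|rowSup 𝓕 i] =ᵐ[μ] μ[f|𝓕 i j] := by
  have hrow : ∀ l ≥ j, μ[μ[f|colSup 𝓕 j]|𝓕 i l] =ᵐ[μ] μ[f|𝓕 i j] := fun l hl =>
    condExp_condExp_iSup_ae_eq_of_eventually (monotone_nat_of_le_succ fun k => hmono₁ k j)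
      (fun k => hle k j) <| (eventually_ge_atTop i).mono fun k hk => by
        simpa only [min_eq_left hk, min_eq_right hl] using hF4 i l k j f hf
  exact condExp_iSup_ae_eq_of_eventually_s17 (monotone_nat_of_le_succ (hmono₂ i)) (hle i)
    ((eventually_ge_atTop j).mono hrow)

end TwoParameter

/-- For a two-parameter filtration, the (F4) condition
`𝔼_{i,j}𝔼_{k,l} = 𝔼_{min(i,k),min(j,l)} = 𝔼_{k,l}𝔼_{i,j}` holds if and only if for all
`i, j` the σ-algebras `ℱ_{i,∞}` and `ℱ_{∞,j}` are conditionally independent given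
`ℱ_{i,j}`, i.e. `𝔼_{i,∞}𝔼_{∞,j} = 𝔼_{i,j} = 𝔼_{∞,j}𝔼_{i,∞}` on `L¹`. -/
theorem f4_iff_conditionally_independent {Ω : Type*} [m0 : MeasurableSpace Ω]
    (μ : Measure Ω) [IsProbabilityMeasure μ] (𝓕 : ℕ → ℕ → MeasurableSpace Ω)
    (hle : ∀ i j, 𝓕 i j ≤ m0)
    (hmono₁ : ∀ i j, 𝓕 i j ≤ 𝓕 (i + 1) j) (hmono₂ : ∀ i j, 𝓕 i j ≤ 𝓕 i (j + 1)) :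
    (∀ i j k l : ℕ, ∀ f : Ω → ℝ, Integrable f μ →
        μ[μ[f|𝓕 k l]|𝓕 i j] =ᵐ[μ] μ[f|𝓕 (min i k) (min j l)] ∧
        μ[μ[f|𝓕 i j]|𝓕 k l] =ᵐ[μ] μ[f|𝓕 (min i k) (min j l)]) ↔
      (∀ i j : ℕ, ∀ f : Ω → ℝ, Integrable f μ →
        μ[μ[f|colSup 𝓕 j]|rowSup 𝓕 i] =ᵐ[μ] μ[f|𝓕 i j] ∧
        μ[μ[f|rowSup 𝓕 i]|colSup 𝓕 j] =ᵐ[μ] μ[f|𝓕 i j]) := by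
  constructor
  · intro hF4 i j f hf
    -- the second identity is the first one for the transposed filtration `(i, j) ↦ 𝓕 j i`
    exact ⟨condExp_rowSup_condExp_colSup_ae_eq_of_f4 hle hmono₁ hmono₂
        (fun a b c d g hg => (hF4 a b c d g hg).1) i j hf,
      condExp_rowSup_condExp_colSup_ae_eq_of_f4 (𝓕 := fun a b => 𝓕 b a)
        (fun a b => hle b a) (fun a b => hmono₂ b a) (fun a b => hmono₁ b a)
        (fun a b c d g hg => (hF4 b a d c g hg).1) j i hf⟩
  · intro hCI i j k l f hf
    refine ⟨condExp_condExp_ae_eq_min_of_condIndep hle hmono₁ hmono₂ hCI i j k l hf, ?_⟩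
    rw [min_comm i k, min_comm j l]
    exact condExp_condExp_ae_eq_min_of_condIndep hle hmono₁ hmono₂ hCI k l i j hf
end
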